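/- arXiv:1003.0490 — 5 statements merged into one kernel-verified Lean document; each statement's English description precedes it below -/
import Mathlib

section
/- Let T be a standard labeling of Y(λ), and for u > 0 set z(u) = (u, u², …, u^N) ∈ ℂ^N. Then there exist u₀ > 0 and functions t_i^{(b)} : (u₀, ∞) → ℂ, indexed by pairs of an integer 1 ≤ i ≤ k−1 and a box b of Y(λ) lying in a row of index > i, such that: (a) for every u > u₀, the tuple t(u) is a critical point of the master function S(·, z(u)); (b) for each such (i,b) there is a rational number β_i^{(b)} with 0 < β_i^{(b)} < 1 such that t_i^{(b)}(u)/u^{T(b)} → β_i^{(b)} as u → ∞; (c) for each j ∈ {1,…,N}, z_j(u)·( Σ_{ℓ≠j} (z_j(u) − z_ℓ(u))^{-1} − Σ_b (z_j(u) − t_1^{(b)}(u))^{-1} ) → c(T,j) = y(T,j) − x(T,j) as u → ∞. -/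
/-!
Write `t_i^{(b)} = u^(b+1) X_i^{(b)}` with `X_i^{(b)} = ∏_{m ≤ i} y_m^{(b)} / (1 + y_m^{(b)})`, and
read `z_b = u^(b+1)` as Bethe variables of row index `0`. Multiplied by `t_i^{(b)}`, a Bethe
equation becomes a combination of terms `t / (t' - t)`, rational in `ε = u⁻¹` and regular at
`ε = 0`, where they equal `-1`, `0` or `X / (X' - X)` according as the label of `t'` is smaller
than, larger than or equal to that of `t`. At `ε = 0` the system is therefore the triangular affine
system `y_i - (1 + y_{i+1}) = μ_i - μ_{i+1}` (`μ_s` counts the smaller labels in row `s`), and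
because the tableau is standard its solution `A_i^{(b)}` consists of positive integers. The linear
part is unipotent, so the implicit function theorem continues this solution to small `ε`. Then
`t_i^{(b)} / u^(b+1) → β_i^{(b)} = ∏_{m ≤ i} A_m^{(b)} / (1 + A_m^{(b)}) ∈ (0, 1)`; variables with
different labels grow at different rates and `β^{(b)}` is strictly decreasing in `i`, so the
variables are eventually distinct, and the same degeneration at `ε = 0` evaluates the limit in (c)
to the content.
-/

open Finset Filter

noncomputable section

namespace BetheAsymptotics

def scaledNum (d : ℤ) (x ε : ℂ) : ℂ :=
  if 0 ≤ d then x * ε ^ d.toNat else x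

def scaledDen (d : ℤ) (x w ε : ℂ) : ℂ :=
  if 0 ≤ d then w - x * ε ^ d.toNat else w * ε ^ (-d).toNat - x

/-- For `u ≠ 0` and `d = p - m`, `scaledQuot d x w u⁻¹ = x u^m / (w u^p - x u^m)`
(`inv_sub_mul_eq_neg_scaledQuot`); numerator and denominator are polynomials in `ε = u⁻¹`, so
the quotient is regular at `ε = 0`. -/
def scaledQuot (d : ℤ) (x w ε : ℂ) : ℂ :=
  scaledNum d x ε / scaledDen d x w ε

section ScaledQuot

variable {u : ℂ} {d : ℤ} {x w ε : ℂ}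

lemma pow_mul_inv_pow_sub (hu : u ≠ 0) {m p : ℕ} (h : m ≤ p) :
    u ^ p * u⁻¹ ^ (p - m) = u ^ m := by
  rw [inv_pow, ← pow_sub₀ u hu (Nat.sub_le p m), Nat.sub_sub_self h]

lemma pow_max_mul_scaledNum (hu : u ≠ 0) (m p : ℕ) (x : ℂ) :
    u ^ max p m * scaledNum ((p : ℤ) - m) x u⁻¹ = x * u ^ m := by
  rcases le_total m p with h | h
  · rw [scaledNum, if_pos (by omega), show ((p : ℤ) - m).toNat = p - m by omega, max_eq_left h,
      mul_left_comm, pow_mul_inv_pow_sub hu h]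
  · rw [scaledNum, max_eq_right h]
    rcases h.eq_or_lt with rfl | h
    · simp [mul_comm]
    · rw [if_neg (by omega), mul_comm]

lemma pow_max_mul_scaledDen (hu : u ≠ 0) (m p : ℕ) (x w : ℂ) :
    u ^ max p m * scaledDen ((p : ℤ) - m) x w u⁻¹ = w * u ^ p - x * u ^ m := by
  rcases le_total m p with h | h
  · rw [scaledDen, if_pos (by omega), show ((p : ℤ) - m).toNat = p - m by omega, max_eq_left h,
      mul_sub, mul_comm (u ^ p) w, mul_left_comm (u ^ p) x, pow_mul_inv_pow_sub hu h]
  · rcases h.eq_or_lt with rfl | h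
    · simp [scaledDen, mul_sub, mul_comm]
    · rw [scaledDen, if_neg (by omega), show (-((p : ℤ) - m)).toNat = m - p by omega,
        max_eq_right h.le, mul_sub, mul_left_comm, pow_mul_inv_pow_sub hu h.le, mul_comm x]

lemma inv_sub_mul_eq_neg_scaledQuot (hu : u ≠ 0) (m p : ℕ) (x w : ℂ) :
    (u ^ (m + 1) * x - u ^ (p + 1) * w)⁻¹ * (u ^ (m + 1) * x)
      = -scaledQuot ((p : ℤ) - m) x w u⁻¹ := by
  have hmax : u ^ max (p + 1) (m + 1) ≠ 0 := pow_ne_zero _ hu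
  have hd : ((p + 1 : ℕ) : ℤ) - (m + 1 : ℕ) = (p : ℤ) - m := by push_cast; ring
  rw [scaledQuot, ← hd, ← mul_div_mul_left _ _ hmax, pow_max_mul_scaledNum hu,
    pow_max_mul_scaledDen hu, show w * u ^ (p + 1) - x * u ^ (m + 1)
      = -(u ^ (m + 1) * x - u ^ (p + 1) * w) by ring, div_neg, neg_neg, div_eq_inv_mul, mul_comm x]

lemma pow_succ_mul_ne_of_scaledDen_ne_zero (hu : u ≠ 0) {m p : ℕ}
    (h : scaledDen ((p : ℤ) - m) x w u⁻¹ ≠ 0) : u ^ (m + 1) * x ≠ u ^ (p + 1) * w := by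
  have hd : ((p + 1 : ℕ) : ℤ) - (m + 1 : ℕ) = (p : ℤ) - m := by push_cast; ring
  intro heq
  apply h
  have := pow_max_mul_scaledDen hu (m + 1) (p + 1) x w
  rw [hd, mul_comm x, mul_comm w, heq, sub_self] at this
  exact (mul_eq_zero.mp this).resolve_left (pow_ne_zero _ hu)

lemma scaledDen_zero_ne_zero (hneg : d < 0 → x ≠ 0) (hzero : d = 0 → w ≠ x)
    (hpos : 0 < d → w ≠ 0) : scaledDen d x w 0 ≠ 0 := by
  rcases lt_trichotomy d 0 with h | rfl | h
  · rw [scaledDen, if_neg h.not_ge, zero_pow (by omega), mul_zero, zero_sub, neg_ne_zero]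
    exact hneg h
  · simpa [scaledDen, sub_eq_zero] using hzero rfl
  · rw [scaledDen, if_pos h.le, zero_pow (by omega), mul_zero, sub_zero]
    exact hpos h

lemma scaledQuot_zero_of_neg (h : d < 0) (hx : x ≠ 0) (w : ℂ) : scaledQuot d x w 0 = -1 := by
  rw [scaledQuot, scaledNum, scaledDen, if_neg h.not_ge, if_neg h.not_ge,
    zero_pow (by omega), mul_zero, zero_sub, div_neg, div_self hx]

lemma scaledQuot_zero_self (x w : ℂ) : scaledQuot 0 x w 0 = x / (w - x) := by
  simp [scaledQuot, scaledNum, scaledDen]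

lemma scaledQuot_zero_of_pos (h : 0 < d) (x w : ℂ) : scaledQuot d x w 0 = 0 := by
  rw [scaledQuot, scaledNum, if_pos h.le, zero_pow (by omega), mul_zero, zero_div]

lemma continuous_scaledDen (d : ℤ) :
    Continuous fun q : ℂ × ℂ × ℂ => scaledDen d q.1 q.2.1 q.2.2 := by
  unfold scaledDen
  split_ifs <;> fun_prop

lemma contDiffAt_scaledQuot {n : WithTop ℕ∞} (h : scaledDen d x w ε ≠ 0) :
    ContDiffAt ℂ n (fun q : ℂ × ℂ × ℂ => scaledQuot d q.1 q.2.1 q.2.2) (x, w, ε) := by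
  unfold scaledQuot scaledNum
  refine ContDiffAt.div ?_ ?_ h
  · split_ifs <;> fun_prop
  · unfold scaledDen
    split_ifs <;> fun_prop

end ScaledQuot

section InteractionSum

variable {N : ℕ}

def interactionSum (S : Finset (Fin N)) (b : Fin N) (x : ℂ) (w : Fin N → ℂ) (ε : ℂ) : ℂ :=
  ∑ b' ∈ S, scaledQuot ((b' : ℤ) - b) x (w b') ε

lemma interactionSum_zero (S : Finset (Fin N)) (b : Fin N) {x : ℂ} (hx : x ≠ 0) (w : Fin N → ℂ) :
    interactionSum S b x w 0
      = -(#(S.filter (· < b)) : ℂ) + if b ∈ S then x / (w b - x) else 0 := by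
  have hterm : ∀ b' ∈ S, scaledQuot ((b' : ℤ) - b) x (w b') 0
      = if b' < b then -1 else if b' = b then x / (w b' - x) else 0 := by
    intro b' _
    rcases lt_trichotomy b' b with h | rfl | h
    · rw [if_pos h, scaledQuot_zero_of_neg (by have := Fin.lt_def.mp h; omega) hx]
    · simp [scaledQuot_zero_self]
    · rw [if_neg h.not_gt, if_neg h.ne', scaledQuot_zero_of_pos (by have := Fin.lt_def.mp h; omega)]
  rw [interactionSum, sum_congr rfl hterm, sum_ite, sum_const, nsmul_eq_mul, mul_neg_one,
    sum_ite_eq']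
  simp [mem_filter]

lemma sum_inv_sub_mul_eq_neg_interactionSum {u : ℂ} (hu : u ≠ 0) (S : Finset (Fin N))
    (b : Fin N) (x : ℂ) (w : Fin N → ℂ) :
    ∑ b' ∈ S, (u ^ ((b : ℕ) + 1) * x - u ^ ((b' : ℕ) + 1) * w b')⁻¹ * (u ^ ((b : ℕ) + 1) * x)
      = -interactionSum S b x w u⁻¹ := by
  simp only [inv_sub_mul_eq_neg_scaledQuot hu, interactionSum, sum_neg_distrib]

variable {H : Type*} [NormedAddCommGroup H] [NormedSpace ℂ H] {n : WithTop ℕ∞}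

lemma contDiffAt_interactionSum {S : Finset (Fin N)} {b : Fin N} {f e : H → ℂ}
    {g : H → Fin N → ℂ} {p : H} (hf : ContDiffAt ℂ n f p)
    (hg : ∀ b' ∈ S, ContDiffAt ℂ n (fun q => g q b') p) (he : ContDiffAt ℂ n e p)
    (hden : ∀ b' ∈ S, scaledDen ((b' : ℤ) - b) (f p) (g p b') (e p) ≠ 0) :
    ContDiffAt ℂ n (fun q => interactionSum S b (f q) (g q) (e q)) p :=
  ContDiffAt.sum fun b' hb' => (contDiffAt_scaledQuot (hden b' hb')).comp
    (f := fun q => (f q, g q b', e q)) p (hf.prodMk ((hg b' hb').prodMk he))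

lemma tendsto_interactionSum {α : Type*} {l : Filter α} {S : Finset (Fin N)} {b : Fin N}
    {f e : α → ℂ} {g : α → Fin N → ℂ} {x ε : ℂ} {w : Fin N → ℂ}
    (hf : Tendsto f l (nhds x)) (hg : ∀ b' ∈ S, Tendsto (fun a => g a b') l (nhds (w b')))
    (he : Tendsto e l (nhds ε)) (hden : ∀ b' ∈ S, scaledDen ((b' : ℤ) - b) x (w b') ε ≠ 0) :
    Tendsto (fun a => interactionSum S b (f a) (g a) (e a)) l
      (nhds (interactionSum S b x w ε)) := by
  unfold interactionSum
  refine tendsto_finsetSum S fun b' hb' => ?_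
  have hcomp := (contDiffAt_scaledQuot (n := 0) (hden b' hb')).continuousAt.tendsto.comp
    (hf.prodMk_nhds ((hg b' hb').prodMk_nhds he))
  exact hcomp

end InteractionSum

section Tableau

variable {N : ℕ} {row : Fin N → ℕ}

def below (row : Fin N → ℕ) (s : ℕ) : Finset (Fin N) := univ.filter (s < row ·)

def numBelow (row : Fin N → ℕ) (s : ℕ) (b : Fin N) : ℕ := #((below row s).filter (· < b))

def numInRow (row : Fin N → ℕ) (s : ℕ) (b : Fin N) : ℕ :=
  #(univ.filter (fun j => row j = s ∧ j < b))

/-- The value at `u = ∞` of the chain variable `y_i^{(b)}` (see `chainProd`). -/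
def chainLimit (row : Fin N → ℕ) (i : ℕ) (b : Fin N) : ℤ :=
  row b - i - 1 + numInRow row i b - numInRow row (row b) b

@[simp] lemma mem_below {s : ℕ} {b : Fin N} : b ∈ below row s ↔ s < row b := by simp [below]

lemma numBelow_pred {s : ℕ} (hs : 1 ≤ s) (b : Fin N) :
    numBelow row (s - 1) b = numInRow row s b + numBelow row s b := by
  rw [numBelow, numInRow, numBelow, ← card_union_of_disjoint]
  · congr 1
    ext j
    simp only [mem_filter, mem_below, mem_union, mem_univ, true_and]
    omega
  · exact disjoint_left.mpr fun j h1 h2 => by simp only [mem_filter, mem_below] at h1 h2; omega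

lemma numBelow_zero (hrow : ∀ j, 1 ≤ row j) (b : Fin N) : numBelow row 0 b = b := by
  rw [numBelow, show below row 0 = univ from eq_univ_of_forall fun j => mem_below.mpr (hrow j),
    filter_gt_eq_Iio, Fin.card_Iio]

lemma chainLimit_sub_chainLimit_succ {i : ℕ} {b : Fin N} (hi : 1 ≤ i) (hib : i < row b) :
    chainLimit row i b - (if i + 1 < row b then 1 + chainLimit row (i + 1) b else 0)
      + (2 * numBelow row i b - numBelow row (i + 1) b - numBelow row (i - 1) b : ℤ) = 0 := by
  have h1 := numBelow_pred (row := row) hi b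
  have h2 := numBelow_pred (row := row) (s := i + 1) (by omega) b
  rw [Nat.add_sub_cancel] at h2
  split_ifs with h
  · simp only [chainLimit]; omega
  · simp only [chainLimit, show row b = i + 1 by omega]; omega

variable {k : ℕ} {lam : ℕ → ℕ} {col : Fin N → ℕ}
  (hmono : ∀ i j : ℕ, 1 ≤ i → i ≤ j → j ≤ k → lam j ≤ lam i)
  (hsum : ∑ i ∈ Icc 1 k, lam i = N)
  (hbox : ∀ j : Fin N, 1 ≤ row j ∧ row j ≤ k ∧ 1 ≤ col j ∧ col j ≤ lam (row j))
  (hinj : Function.Injective (fun j : Fin N => (row j, col j)))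
  (hstdrow : ∀ j j' : Fin N, row j = row j' → col j < col j' → j < j')
  (hstdcol : ∀ j j' : Fin N, col j = col j' → row j < row j' → j < j')

include hsum hbox hinj in
lemma image_col_filter_row_eq {s : ℕ} (hs : s ∈ Icc 1 k) :
    (univ.filter (row · = s)).image col = Icc 1 (lam s) := by
  have hsub : ∀ s, (univ.filter (row · = s)).image col ⊆ Icc 1 (lam s) := by
    intro s c hc
    obtain ⟨j, hj, rfl⟩ := mem_image.mp hc
    obtain ⟨-, -, h1, h2⟩ := hbox j
    exact mem_Icc.mpr ⟨h1, (mem_filter.mp hj).2 ▸ h2⟩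
  have hcard : ∀ s, #(univ.filter (row · = s)) = #((univ.filter (row · = s)).image col) :=
    fun s => (card_image_of_injOn fun j hj j' hj' h =>
      hinj (Prod.ext ((mem_filter.mp hj).2.trans (mem_filter.mp hj').2.symm) h)).symm
  have hle : ∀ s ∈ Icc 1 k, #(univ.filter (row · = s)) ≤ lam s := fun s _ => by
    simpa [hcard s] using card_le_card (hsub s)
  have hfib : ∑ s ∈ Icc 1 k, #(univ.filter (row · = s)) = ∑ s ∈ Icc 1 k, lam s := by
    rw [← card_eq_sum_card_fiberwise fun j _ => mem_Icc.mpr ⟨(hbox j).1, (hbox j).2.1⟩, hsum,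
      card_univ, Fintype.card_fin]
  refine eq_of_subset_of_card_le (hsub s) ?_
  rw [← hcard, (sum_eq_sum_iff_of_le hle).mp hfib s hs, Nat.card_Icc, Nat.add_sub_cancel]

include hsum hbox hinj in
lemma exists_box {s c : ℕ} (hs : s ∈ Icc 1 k) (hc : c ∈ Icc 1 (lam s)) :
    ∃ j, row j = s ∧ col j = c := by
  obtain ⟨j, hj, rfl⟩ := mem_image.mp ((image_col_filter_row_eq hsum hbox hinj hs).symm ▸ hc)
  exact ⟨j, (mem_filter.mp hj).2, rfl⟩

include hinj hstdrow in
lemma lt_iff_col_lt_of_row_eq {j j' : Fin N} (h : row j = row j') : j < j' ↔ col j < col j' := by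
  refine ⟨fun hlt => ?_, hstdrow j j' h⟩
  by_contra hcol
  rcases (not_lt.mp hcol).eq_or_lt with heq | hgt
  · exact hlt.ne (hinj (Prod.ext h heq.symm))
  · exact (hstdrow j' j h.symm hgt).not_gt hlt

include hsum hbox hinj hstdrow in
lemma numInRow_row_self (b : Fin N) : numInRow row (row b) b = col b - 1 := by
  obtain ⟨hr1, hrk, hc1, hcl⟩ := hbox b
  have himage : (univ.filter (fun j => row j = row b ∧ j < b)).image col = Ico 1 (col b) := by
    ext c
    simp only [mem_image, mem_filter, mem_univ, true_and, mem_Ico]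
    constructor
    · rintro ⟨j, ⟨hj, hjb⟩, rfl⟩
      exact ⟨(hbox j).2.2.1, (lt_iff_col_lt_of_row_eq hinj hstdrow hj).mp hjb⟩
    · rintro ⟨h1, h2⟩
      obtain ⟨j, hj, rfl⟩ := exists_box hsum hbox hinj (mem_Icc.mpr ⟨hr1, hrk⟩)
        (mem_Icc.mpr ⟨h1, by omega⟩)
      exact ⟨j, ⟨hj, hstdrow j b hj h2⟩, rfl⟩
  rw [numInRow, ← card_image_of_injOn (f := col), himage, Nat.card_Ico]
  intro j hj j' hj' h
  exact hinj (Prod.ext ((mem_filter.mp hj).2.1.trans (mem_filter.mp hj').2.1.symm) h)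

include hmono hsum hbox hinj hstdrow hstdcol in
lemma col_le_numInRow {i : ℕ} {b : Fin N} (hi : 1 ≤ i) (hib : i < row b) :
    col b ≤ numInRow row i b := by
  obtain ⟨hr1, hrk, hc1, hcl⟩ := hbox b
  have hsub : Icc 1 (col b) ⊆ (univ.filter (fun j => row j = i ∧ j < b)).image col := by
    intro c hc
    obtain ⟨h1, h2⟩ := mem_Icc.mp hc
    obtain ⟨j, hj, rfl⟩ := exists_box hsum hbox hinj (mem_Icc.mpr ⟨hi, by omega⟩)
      (mem_Icc.mpr ⟨h1, h2.trans (hcl.trans (hmono i (row b) hi hib.le hrk))⟩)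
    obtain ⟨j', hj', hcj'⟩ := exists_box hsum hbox hinj (mem_Icc.mpr ⟨hr1, hrk⟩)
      (mem_Icc.mpr ⟨h1, h2.trans hcl⟩)
    have hjj' : j < j' := hstdcol j j' hcj'.symm (hj ▸ hj' ▸ hib)
    have hj'b : j' ≤ b := by
      rcases h2.eq_or_lt with heq | hlt
      · exact (hinj (Prod.ext hj' (hcj'.trans heq))).le
      · exact (hstdrow j' b hj' (hcj' ▸ hlt)).le
    exact mem_image.mpr ⟨j, mem_filter.mpr ⟨mem_univ j, hj, hjj'.trans_le hj'b⟩, rfl⟩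
  simpa [numInRow] using (card_le_card hsub).trans card_image_le

include hmono hsum hbox hinj hstdrow hstdcol in
lemma one_le_chainLimit {i : ℕ} {b : Fin N} (hi : 1 ≤ i) (hib : i < row b) :
    1 ≤ chainLimit row i b := by
  have h1 := col_le_numInRow hmono hsum hbox hinj hstdrow hstdcol hi hib
  have h2 := numInRow_row_self hsum hbox hinj hstdrow b
  have h3 := (hbox b).2.2.1
  rw [chainLimit, h2]
  omega

include hsum hbox hinj hstdrow in
lemma content_eq (b : Fin N) :
    (b : ℤ) - numBelow row 1 b - (if 1 < row b then 1 + chainLimit row 1 b else 0)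
      = (col b : ℤ) - row b := by
  have h0 := numBelow_zero (fun j => (hbox j).1) b
  have h1 := numBelow_pred (row := row) le_rfl b
  have h2 := numInRow_row_self hsum hbox hinj hstdrow b
  have h3 := (hbox b).1
  have h4 := (hbox b).2.2.1
  rw [Nat.sub_self, h0] at h1
  split_ifs with h
  · rw [chainLimit, h2]; omega
  · rw [show row b = 1 by omega] at h2 ⊢; omega

end Tableau

section LimitRatio

variable {N : ℕ} {row : Fin N → ℕ}

/-- The limit `β_i^{(b)}` of `t_i^{(b)}(u) / u^(b+1)`. -/
def limitRatio (row : Fin N → ℕ) (i : ℕ) (b : Fin N) : ℚ :=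
  ∏ m ∈ Icc 1 i, ((chainLimit row m b : ℚ) / (1 + chainLimit row m b))

@[simp] lemma limitRatio_zero (b : Fin N) : limitRatio row 0 b = 1 := by simp [limitRatio]

lemma limitRatio_succ (i : ℕ) (b : Fin N) : limitRatio row (i + 1) b
    = limitRatio row i b * (chainLimit row (i + 1) b / (1 + chainLimit row (i + 1) b)) :=
  prod_Icc_succ_top (by omega) _

section

variable (hA : ∀ m b, 1 ≤ m → m < row b → 1 ≤ chainLimit row m b)
include hA

lemma limitRatio_pos {i : ℕ} {b : Fin N} (hib : i < row b) : 0 < limitRatio row i b :=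
  prod_pos fun m hm => by
    have : (1 : ℚ) ≤ chainLimit row m b := by
      exact_mod_cast hA m b (mem_Icc.mp hm).1 (by linarith [(mem_Icc.mp hm).2])
    positivity

lemma limitRatio_succ_lt {i : ℕ} {b : Fin N} (hib : i + 1 < row b) :
    limitRatio row (i + 1) b < limitRatio row i b := by
  have h : (1 : ℚ) ≤ chainLimit row (i + 1) b := by exact_mod_cast hA (i + 1) b (by omega) hib
  rw [limitRatio_succ]
  exact mul_lt_of_lt_one_right (limitRatio_pos hA (by omega)) ((div_lt_one (by linarith)).mpr
    (by linarith))

lemma limitRatio_strictAntiOn (b : Fin N) :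
    StrictAntiOn (limitRatio row · b) (Set.Iic (row b - 1)) :=
  strictAntiOn_Iic_of_succ_lt fun m hm => limitRatio_succ_lt hA (by omega)

lemma limitRatio_lt_one {i : ℕ} {b : Fin N} (hi : 1 ≤ i) (hib : i < row b) :
    limitRatio row i b < 1 := by
  simpa using limitRatio_strictAntiOn hA b (by simp) (by simp; omega) (by omega : 0 < i)

lemma scaledDen_limitRatio_ne_zero {i i' : ℕ} {b b' : Fin N} (hib : i < row b)
    (hib' : i' < row b') (hne : (i, b) ≠ (i', b')) :
    scaledDen ((b' : ℤ) - b) (limitRatio row i b) (limitRatio row i' b') 0 ≠ 0 := by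
  refine scaledDen_zero_ne_zero (fun _ => ?_) (fun hd => ?_) (fun _ => ?_)
  · exact_mod_cast (limitRatio_pos hA hib).ne'
  · obtain rfl : b' = b := Fin.ext (by omega)
    have hii : i' ≠ i := fun h => hne (by rw [h])
    exact_mod_cast fun h => hii ((limitRatio_strictAntiOn hA b').injOn (by simp; omega)
      (by simp; omega) h)
  · exact_mod_cast (limitRatio_pos hA hib').ne'

lemma one_div_limitRatio_one_sub_one {b : Fin N} (hb : 1 < row b) :
    1 / ((limitRatio row 1 b : ℂ) - 1) = -(1 + chainLimit row 1 b) := by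
  have hne : (1 : ℂ) + chainLimit row 1 b ≠ 0 := by
    exact_mod_cast (by linarith [hA 1 b le_rfl hb] : (1 : ℤ) + chainLimit row 1 b ≠ 0)
  simp only [limitRatio, Icc_self, prod_singleton]
  push_cast
  field_simp
  ring

end

end LimitRatio

section BetheEquations

variable {N : ℕ} {row : Fin N → ℕ}

def betheLHS (row : Fin N → ℕ) (t : ℕ → Fin N → ℂ) (i : ℕ) (b : Fin N) : ℂ :=
  2 * ∑ b' ∈ (below row i).erase b, (t i b - t i b')⁻¹
    - ∑ b' ∈ below row (i + 1), (t i b - t (i + 1) b')⁻¹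
    - ∑ b' ∈ below row (i - 1), (t i b - t (i - 1) b')⁻¹

/-- The Bethe equation for `t_i^{(b)} = u^(b+1) X_i^{(b)}`, multiplied by `t_i^{(b)}` and
written in the variable `ε = u⁻¹` (see `mul_betheLHS`). -/
def rescaledBethe (row : Fin N → ℕ) (ε : ℂ) (X : ℕ → Fin N → ℂ) (i : ℕ) (b : Fin N) : ℂ :=
  -2 * interactionSum ((below row i).erase b) b (X i b) (X i) ε
    + interactionSum (below row (i + 1)) b (X i b) (X (i + 1)) ε
    + interactionSum (below row (i - 1)) b (X i b) (X (i - 1)) ε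

lemma mul_betheLHS {u : ℂ} (hu : u ≠ 0) (X : ℕ → Fin N → ℂ) (i : ℕ) (b : Fin N) :
    u ^ ((b : ℕ) + 1) * X i b * betheLHS row (fun i b => u ^ ((b : ℕ) + 1) * X i b) i b
      = rescaledBethe row u⁻¹ X i b := by
  have key : ∀ (S : Finset (Fin N)) (Y : Fin N → ℂ), u ^ ((b : ℕ) + 1) * X i b
      * ∑ b' ∈ S, (u ^ ((b : ℕ) + 1) * X i b - u ^ ((b' : ℕ) + 1) * Y b')⁻¹
      = -interactionSum S b (X i b) Y u⁻¹ := fun S Y => by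
    rw [mul_sum, ← sum_inv_sub_mul_eq_neg_interactionSum hu]
    exact sum_congr rfl fun _ _ => mul_comm _ _
  rw [betheLHS, rescaledBethe, mul_sub, mul_sub, mul_left_comm _ (2 : ℂ), key, key, key]
  ring

lemma rescaledBethe_zero {X : ℕ → Fin N → ℂ} {i : ℕ} {b : Fin N} (hib : i < row b)
    (hX : X i b ≠ 0) :
    rescaledBethe row 0 X i b
      = (2 * numBelow row i b - numBelow row (i + 1) b - numBelow row (i - 1) b : ℤ)
        + (if i + 1 < row b then X i b / (X (i + 1) b - X i b) else 0)
        + X i b / (X (i - 1) b - X i b) := by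
  have herase : ((below row i).erase b).filter (· < b) = (below row i).filter (· < b) := by
    rw [filter_erase, erase_eq_of_notMem (by simp)]
  simp only [rescaledBethe, interactionSum_zero _ _ hX, herase, notMem_erase, if_false,
    mem_below, if_pos (by omega : i - 1 < row b), numBelow]
  push_cast
  ring

lemma mul_div_one_add_div_sub {x g : ℂ} (hx : x ≠ 0) (hg : 1 + g ≠ 0) :
    x * (g / (1 + g)) / (x - x * (g / (1 + g))) = g := by
  field_simp
  ring

lemma div_mul_div_one_add_sub {x g : ℂ} (hx : x ≠ 0) (hg : 1 + g ≠ 0) :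
    x / (x * (g / (1 + g)) - x) = -(1 + g) := by
  field_simp
  ring

end BetheEquations

section ChainSpace

open Fin.NatCast

variable {N k : ℕ} {row : Fin N → ℕ}

abbrev ChainSpace (N k : ℕ) := Fin (k + 1) → Fin N → ℂ

/-- The coordinate `y_m^{(b)}`, for a natural-number index `m` (read modulo `k + 1`). -/
def chainVar (y : ChainSpace N k) (m : ℕ) (b : Fin N) : ℂ := y m b

def chainProd (y : ChainSpace N k) (i : ℕ) (b : Fin N) : ℂ :=
  ∏ m ∈ Icc 1 i, chainVar y m b / (1 + chainVar y m b)

def IsAdmissible (row : Fin N → ℕ) (y : ChainSpace N k) : Prop :=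
  ∀ m b, 1 ≤ m → m < row b → chainVar y m b ≠ 0 ∧ 1 + chainVar y m b ≠ 0

@[simp] lemma chainVar_val (y : ChainSpace N k) (i : Fin (k + 1)) (b : Fin N) :
    chainVar y i b = y i b := by
  rw [chainVar, Fin.cast_val_eq_self]

@[simp] lemma chainProd_zero (y : ChainSpace N k) (b : Fin N) : chainProd y 0 b = 1 := by
  simp [chainProd]

lemma chainProd_succ (y : ChainSpace N k) (i : ℕ) (b : Fin N) :
    chainProd y (i + 1) b = chainProd y i b * (chainVar y (i + 1) b / (1 + chainVar y (i + 1) b)) :=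
  prod_Icc_succ_top (by omega) _

lemma chainProd_ne_zero {y : ChainSpace N k} (hy : IsAdmissible row y) {i : ℕ} {b : Fin N}
    (hib : i < row b) : chainProd y i b ≠ 0 :=
  prod_ne_zero_iff.mpr fun m hm => by
    obtain ⟨h1, h2⟩ := mem_Icc.mp hm
    exact div_ne_zero (hy m b h1 (by omega)).1 (hy m b h1 (by omega)).2

lemma rescaledBethe_zero_chainProd {y : ChainSpace N k} (hy : IsAdmissible row y) {i : ℕ}
    {b : Fin N} (hi : 1 ≤ i) (hib : i < row b) :
    rescaledBethe row 0 (chainProd y) i b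
      = chainVar y i b - (if i + 1 < row b then 1 + chainVar y (i + 1) b else 0)
        + (2 * numBelow row i b - numBelow row (i + 1) b - numBelow row (i - 1) b : ℤ) := by
  have hX := chainProd_ne_zero hy hib
  have hprev : chainProd y i b / (chainProd y (i - 1) b - chainProd y i b) = chainVar y i b := by
    obtain ⟨j, rfl⟩ := Nat.exists_eq_add_of_le' hi
    rw [Nat.add_sub_cancel, chainProd_succ]
    exact mul_div_one_add_div_sub (chainProd_ne_zero hy (by omega)) (hy _ b hi hib).2
  rw [rescaledBethe_zero hib hX, hprev]
  split_ifs with h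
  · rw [chainProd_succ, div_mul_div_one_add_sub hX (hy _ b (by omega) h).2]
    ring
  · ring

lemma continuous_chainVar (m : ℕ) (b : Fin N) :
    Continuous fun y : ChainSpace N k => chainVar y m b := by
  unfold chainVar
  fun_prop

lemma contDiffAt_chainProd {n : WithTop ℕ∞} {y : ChainSpace N k} (hy : IsAdmissible row y)
    {i : ℕ} {b : Fin N} (hib : i < row b) : ContDiffAt ℂ n (fun y => chainProd y i b) y := by
  unfold chainProd
  refine contDiffAt_prod fun m hm => ContDiffAt.div ?_ ?_ (hy m b (mem_Icc.mp hm).1 ?_).2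
  · unfold chainVar; fun_prop
  · unfold chainVar; fun_prop
  · linarith [(mem_Icc.mp hm).2]

end ChainSpace

section ImplicitFunction

open Fin.NatCast

variable {N k : ℕ} {row : Fin N → ℕ}

/-- The rescaled Bethe system on the coordinates `1 ≤ i < row b`, and the identity on the
remaining (dummy) coordinates. -/
def betheMap (row : Fin N → ℕ) (p : ℂ × ChainSpace N k) : ChainSpace N k := fun i b =>
  if 1 ≤ (i : ℕ) ∧ (i : ℕ) < row b then rescaledBethe row p.1 (chainProd p.2) i b else p.2 i b

def chainStart (row : Fin N → ℕ) : ChainSpace N k := fun i b =>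
  if 1 ≤ (i : ℕ) ∧ (i : ℕ) < row b then (chainLimit row i b : ℂ) else 0

def chainShift (row : Fin N → ℕ) : ChainSpace N k →ₗ[ℂ] ChainSpace N k where
  toFun y i b := if 1 ≤ (i : ℕ) ∧ (i : ℕ) + 1 < row b then chainVar y (i + 1) b else 0
  map_add' y z := by
    ext i b
    simp only [chainVar, Pi.add_apply]
    split_ifs <;> simp
  map_smul' c y := by
    ext i b
    simp only [chainVar, Pi.smul_apply, smul_eq_mul, RingHom.id_apply]
    split_ifs <;> simp

def betheLinearPart (row : Fin N → ℕ) : ChainSpace N k →ₗ[ℂ] ChainSpace N k :=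
  LinearMap.id - chainShift row

def betheOffset (row : Fin N → ℕ) : ChainSpace N k := fun i b =>
  if 1 ≤ (i : ℕ) ∧ (i : ℕ) < row b then
    ((2 * numBelow row i b - numBelow row (i + 1) b - numBelow row (i - 1) b : ℤ) : ℂ)
      - if (i : ℕ) + 1 < row b then 1 else 0
  else 0

lemma chainShift_apply (y : ChainSpace N k) (i : Fin (k + 1)) (b : Fin N) :
    chainShift row y i b = if 1 ≤ (i : ℕ) ∧ (i : ℕ) + 1 < row b then chainVar y (i + 1) b else 0 :=
  rfl

lemma betheMap_zero_of_isAdmissible {y : ChainSpace N k} (hy : IsAdmissible row y) :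
    betheMap row (0, y) = betheOffset row + betheLinearPart row y := by
  ext i b
  simp only [betheMap, betheOffset, betheLinearPart, Pi.add_apply, LinearMap.sub_apply,
    LinearMap.id_apply, Pi.sub_apply, chainShift_apply]
  by_cases h : 1 ≤ (i : ℕ) ∧ (i : ℕ) < row b
  · rw [if_pos h, if_pos h, rescaledBethe_zero_chainProd hy h.1 h.2, chainVar_val]
    by_cases h' : (i : ℕ) + 1 < row b
    · rw [if_pos h', if_pos h', if_pos ⟨h.1, h'⟩]; ring
    · rw [if_neg h', if_neg h', if_neg fun h'' => h' h''.2]; ring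
  · rw [if_neg h, if_neg h, if_neg fun h'' => h ⟨h''.1, by omega⟩]; ring

variable (hrowk : ∀ b, row b ≤ k)
include hrowk

lemma val_natCast_of_lt_row {m : ℕ} {b : Fin N} (hmb : m < row b) :
    (((m : ℕ) : Fin (k + 1)) : ℕ) = m :=
  Fin.val_cast_of_lt (by have := hrowk b; omega)

lemma eq_zero_of_chainShift_eq_self {y : ChainSpace N k} (h : chainShift row y = y) : y = 0 := by
  have key : ∀ n (i : Fin (k + 1)) b, row b ≤ i + n → y i b = 0 := by
    intro n
    induction n with
    | zero =>
      intro i b hib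
      rw [← congrFun (congrFun h i) b, chainShift_apply, if_neg (by omega)]
    | succ n ih =>
      intro i b hib
      rw [← congrFun (congrFun h i) b, chainShift_apply]
      split_ifs with hc
      · exact ih _ b (by rw [val_natCast_of_lt_row hrowk (m := i + 1) hc.2]; omega)
      · rfl
  ext i b
  exact key k i b (by have := hrowk b; omega)

lemma isInvertible_betheLinearPart :
    (LinearMap.toContinuousLinearMap (betheLinearPart (k := k) row)).IsInvertible := by
  have hinj : Function.Injective (betheLinearPart (k := k) row) := by
    rw [← LinearMap.ker_eq_bot, LinearMap.ker_eq_bot']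
    intro y hy
    exact eq_zero_of_chainShift_eq_self hrowk (sub_eq_zero.mp hy).symm
  exact ⟨(LinearEquiv.ofInjectiveEndo _ hinj).toContinuousLinearEquiv, rfl⟩

variable (hA : ∀ m b, 1 ≤ m → m < row b → 1 ≤ chainLimit row m b)

lemma chainVar_chainStart {m : ℕ} {b : Fin N} (hm : 1 ≤ m) (hmb : m < row b) :
    chainVar (chainStart (k := k) row) m b = chainLimit row m b := by
  rw [chainVar, chainStart, val_natCast_of_lt_row hrowk hmb, if_pos ⟨hm, hmb⟩]

include hA in
lemma isAdmissible_chainStart : IsAdmissible row (chainStart (k := k) row) := by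
  intro m b hm hmb
  have := hA m b hm hmb
  rw [chainVar_chainStart hrowk hm hmb]
  constructor <;> exact_mod_cast (by omega)

lemma chainProd_chainStart {i : ℕ} {b : Fin N} (hib : i < row b) :
    chainProd (chainStart (k := k) row) i b = limitRatio row i b := by
  rw [chainProd, limitRatio]
  push_cast
  exact prod_congr rfl fun m hm => by
    rw [chainVar_chainStart hrowk (mem_Icc.mp hm).1 (by linarith [(mem_Icc.mp hm).2])]

include hA in
lemma betheMap_chainStart : betheMap row (0, chainStart (k := k) row) = 0 := by
  ext i b
  simp only [betheMap, Pi.zero_apply]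
  split_ifs with h
  · have hc := chainLimit_sub_chainLimit_succ h.1 h.2
    rw [rescaledBethe_zero_chainProd (isAdmissible_chainStart hrowk hA) h.1 h.2,
      chainVar_chainStart hrowk h.1 h.2]
    split_ifs at hc ⊢ with h'
    · rw [chainVar_chainStart hrowk (by omega) h']
      exact_mod_cast hc
    · exact_mod_cast hc
  · simp [chainStart, h]

include hA in
lemma eventually_isAdmissible : ∀ᶠ y in nhds (chainStart (k := k) row), IsAdmissible row y := by
  have h : ∀ᶠ y in nhds (chainStart (k := k) row), ∀ m ∈ range (k + 1), ∀ b, 1 ≤ m → m < row b →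
      chainVar y m b ≠ 0 ∧ 1 + chainVar y m b ≠ 0 := by
    simp only [eventually_all_finset, eventually_all]
    intro m _ b hm hmb
    have h0 := isAdmissible_chainStart hrowk hA m b hm hmb
    have hc := continuous_chainVar (k := k) m b
    exact (hc.continuousAt.eventually_ne h0.1).and
      ((continuous_const.add hc).continuousAt.eventually_ne h0.2)
  filter_upwards [h] with y hy m b hm hmb
  exact hy m (mem_range.mpr (by have := hrowk b; omega)) b hm hmb

include hA in
lemma contDiffAt_rescaledBethe {i : ℕ} {b : Fin N} (hi : 1 ≤ i) (hib : i < row b) :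
    ContDiffAt ℂ 1 (fun p : ℂ × ChainSpace N k => rescaledBethe row p.1 (chainProd p.2) i b)
      (0, chainStart row) := by
  have hX : ∀ i' b', i' < row b' →
      ContDiffAt ℂ 1 (fun p : ℂ × ChainSpace N k => chainProd p.2 i' b') (0, chainStart row) :=
    fun i' b' h => (contDiffAt_chainProd (isAdmissible_chainStart hrowk hA) h).comp
      (f := Prod.snd) (0, chainStart row) contDiffAt_snd
  have hden : ∀ i' b', i' < row b' → (i, b) ≠ (i', b') →
      scaledDen ((b' : ℤ) - b) (chainProd (chainStart (k := k) row) i b)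
        (chainProd (chainStart (k := k) row) i' b') 0 ≠ 0 := fun i' b' h hne => by
    rw [chainProd_chainStart hrowk hib, chainProd_chainStart hrowk h]
    exact scaledDen_limitRatio_ne_zero hA hib h hne
  have hsum : ∀ (S : Finset (Fin N)) (i' : ℕ), (∀ b' ∈ S, i' < row b' ∧ (i, b) ≠ (i', b')) →
      ContDiffAt ℂ 1 (fun p : ℂ × ChainSpace N k =>
        interactionSum S b (chainProd p.2 i b) (chainProd p.2 i') p.1) (0, chainStart row) :=
    fun S i' hS => contDiffAt_interactionSum (hX i b hib) (fun b' hb' => hX i' b' (hS b' hb').1)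
      contDiffAt_fst fun b' hb' => hden i' b' (hS b' hb').1 (hS b' hb').2
  refine ((contDiffAt_const.mul (hsum _ i fun b' hb' => ?_)).add
    (hsum _ (i + 1) fun b' hb' => ?_)).add (hsum _ (i - 1) fun b' hb' => ?_)
  · obtain ⟨hne, hb'⟩ := mem_erase.mp hb'
    exact ⟨mem_below.mp hb', fun h => hne (Prod.ext_iff.mp h).2.symm⟩
  · exact ⟨mem_below.mp hb', fun h => by simp at h⟩
  · exact ⟨mem_below.mp hb', fun h => by simp at h; omega⟩

include hA in
lemma contDiffAt_betheMap : ContDiffAt ℂ 1 (betheMap row) (0, chainStart (k := k) row) := by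
  rw [contDiffAt_pi]
  intro i
  rw [contDiffAt_pi]
  intro b
  by_cases h : 1 ≤ (i : ℕ) ∧ (i : ℕ) < row b
  · simp only [betheMap, if_pos h]
    exact contDiffAt_rescaledBethe hrowk hA h.1 h.2
  · simp only [betheMap, if_neg h]
    fun_prop

include hA in
theorem exists_rescaled_solution : ∃ ψ : ℂ → ChainSpace N k,
    Tendsto ψ (nhds 0) (nhds (chainStart row)) ∧
      ∀ᶠ ε in nhds 0, ∀ i b, 1 ≤ i → i < row b → rescaledBethe row ε (chainProd (ψ ε)) i b = 0 := by
  have hS := (contDiffAt_betheMap hrowk hA).hasStrictFDerivAt one_ne_zero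
  have hpartial : fderiv ℂ (betheMap row) (0, chainStart row) ∘L ContinuousLinearMap.inr ℂ ℂ _
      = LinearMap.toContinuousLinearMap (betheLinearPart (k := k) row) := by
    refine (hS.hasFDerivAt.comp _ (hasFDerivAt_prodMk_right 0 _)).unique ?_
    have hev : (fun y : ChainSpace N k => betheMap row (0, y)) =ᶠ[nhds (chainStart row)]
        fun y => betheOffset row + LinearMap.toContinuousLinearMap (betheLinearPart row) y := by
      filter_upwards [eventually_isAdmissible hrowk hA] with y hy
      exact betheMap_zero_of_isAdmissible hy
    exact hev.hasFDerivAt_iff.mpr ((ContinuousLinearMap.hasFDerivAt _).const_add _)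
  have hinv := hpartial ▸ isInvertible_betheLinearPart hrowk
  refine ⟨hS.implicitFunctionOfProdDomain hinv, hS.tendsto_implicitFunctionOfProdDomain hinv, ?_⟩
  filter_upwards [hS.eventually_apply_implicitFunctionOfProdDomain hinv] with ε hε i b hi hib
  have := congrFun (congrFun hε i) b
  rw [betheMap_chainStart hrowk hA, betheMap, val_natCast_of_lt_row hrowk hib] at this
  rwa [if_pos ⟨hi, hib⟩] at this

end ImplicitFunction

section CriticalPoint

variable {N : ℕ} {row : Fin N → ℕ}

/-- `t` is a critical point of the master function `S(·, z)`; the Bethe variables of row index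
`i` are `t i b` for the boxes (labels) `b` with `i < row b`. -/
def IsCriticalPoint (row : Fin N → ℕ) (k : ℕ) (z : Fin N → ℂ) (t : ℕ → Fin N → ℂ) : Prop :=
  (∀ a b : Fin N, 1 < row b → t 1 b ≠ z a) ∧
  (∀ i ∈ Icc 1 (k - 1), ∀ b b' : Fin N, i < row b → i < row b' → b ≠ b' → t i b ≠ t i b') ∧
  (∀ i ∈ Icc 1 (k - 1), ∀ b b' : Fin N, i < row b → i + 1 < row b' → t i b ≠ t (i + 1) b') ∧
  (∀ i ∈ Icc 1 (k - 1), ∀ b : Fin N, i < row b →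
    (if i = 1 then ∑ a : Fin N, (z a - t 1 b)⁻¹ else 0)
      + 2 * ∑ b' ∈ univ.filter (fun b' : Fin N => i < row b' ∧ b' ≠ b), (t i b - t i b')⁻¹
      - ∑ b' ∈ univ.filter (fun b' : Fin N => i + 1 < row b'), (t i b - t (i + 1) b')⁻¹
      - (if 2 ≤ i then ∑ b' ∈ univ.filter (fun b' : Fin N => i - 1 < row b'),
          (t i b - t (i - 1) b')⁻¹ else 0)
      = 0)

/-- Read as Bethe variables of row index `0`, the `z` make the Bethe equation uniform in `i`. -/
lemma betheLHS_eq (hrow : ∀ b, 1 ≤ row b) {z : Fin N → ℂ} {t : ℕ → Fin N → ℂ}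
    (hz : ∀ a, t 0 a = z a) {i : ℕ} (hi : 1 ≤ i) (b : Fin N) :
    betheLHS row t i b = (if i = 1 then ∑ a : Fin N, (z a - t 1 b)⁻¹ else 0)
      + 2 * ∑ b' ∈ univ.filter (fun b' : Fin N => i < row b' ∧ b' ≠ b), (t i b - t i b')⁻¹
      - ∑ b' ∈ univ.filter (fun b' : Fin N => i + 1 < row b'), (t i b - t (i + 1) b')⁻¹
      - (if 2 ≤ i then ∑ b' ∈ univ.filter (fun b' : Fin N => i - 1 < row b'),
          (t i b - t (i - 1) b')⁻¹ else 0) := by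
  have herase : univ.filter (fun b' : Fin N => i < row b' ∧ b' ≠ b) = (below row i).erase b := by
    ext b'
    simp [below, and_comm]
  rw [betheLHS, herase]
  rcases hi.eq_or_lt with rfl | hi
  · have hbelow : below row (1 - 1) = univ := eq_univ_of_forall fun a => mem_below.mpr (hrow a)
    rw [if_neg (by omega : ¬ 2 ≤ 1)]
    simp only [↓reduceIte, hbelow, ← hz, ← neg_sub (t 0 _), inv_neg, sum_neg_distrib]
    simp only [below]
    ring
  · simp only [if_neg hi.ne', if_pos (by omega : 2 ≤ i), below]
    ring

end CriticalPoint

section Asymptotics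

variable {N k : ℕ} {row : Fin N → ℕ}

/-- The Bethe roots `t_i^{(b)}(u) = u^(b+1) X_i^{(b)}(ψ(u⁻¹))`; for `i = 0` these are the
`z_b(u) = u^(b+1)`. -/
def betheRoot (ψ : ℂ → ChainSpace N k) (i : ℕ) (b : Fin N) (u : ℝ) : ℂ :=
  (u : ℂ) ^ ((b : ℕ) + 1) * chainProd (ψ (u : ℂ)⁻¹) i b

@[simp] lemma betheRoot_zero (ψ : ℂ → ChainSpace N k) (b : Fin N) (u : ℝ) :
    betheRoot ψ 0 b u = (u : ℂ) ^ ((b : ℕ) + 1) := by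
  simp [betheRoot]

lemma tendsto_ofReal_inv_atTop : Tendsto (fun u : ℝ => (u : ℂ)⁻¹) atTop (nhds 0) := by
  have h := (Complex.continuous_ofReal.tendsto 0).comp (tendsto_inv_atTop_zero (𝕜 := ℝ))
  simpa [Function.comp_def] using h

lemma mul_sum_inv_sub_eq (ψ : ℂ → ChainSpace N k) {u : ℝ} (hu : 0 < u) (j : Fin N) :
    (u : ℂ) ^ ((j : ℕ) + 1) *
        ((∑ l ∈ univ.erase j, ((u : ℂ) ^ ((j : ℕ) + 1) - (u : ℂ) ^ ((l : ℕ) + 1))⁻¹)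
          - ∑ b ∈ univ.filter (fun b : Fin N => 1 < row b),
              ((u : ℂ) ^ ((j : ℕ) + 1) - betheRoot ψ 1 b u)⁻¹)
      = interactionSum (below row 1) j 1 (chainProd (ψ (u : ℂ)⁻¹) 1) (u : ℂ)⁻¹
        - interactionSum (univ.erase j) j 1 (fun _ => 1) (u : ℂ)⁻¹ := by
  have hu' : (u : ℂ) ≠ 0 := Complex.ofReal_ne_zero.mpr hu.ne'
  have e1 :=
    sum_inv_sub_mul_eq_neg_interactionSum hu' (below row 1) j 1 (chainProd (ψ (u : ℂ)⁻¹) 1)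
  have e2 := sum_inv_sub_mul_eq_neg_interactionSum hu' (univ.erase j) j 1 (fun _ => 1)
  simp only [mul_one] at e1 e2
  rw [mul_sub, mul_sum, mul_sum, ← neg_neg (interactionSum (below row 1) j _ _ _), ← e1,
    ← neg_neg (interactionSum (univ.erase j) j _ _ _), ← e2]
  simp only [betheRoot, below, mul_comm]
  ring

variable {ψ : ℂ → ChainSpace N k} (hrowk : ∀ b, row b ≤ k)
  (hA : ∀ m b, 1 ≤ m → m < row b → 1 ≤ chainLimit row m b)
  (hψ : Tendsto ψ (nhds 0) (nhds (chainStart row)))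
include hrowk hA hψ

lemma tendsto_chainProd {i : ℕ} {b : Fin N} (hib : i < row b) :
    Tendsto (fun u : ℝ => chainProd (ψ (u : ℂ)⁻¹) i b) atTop (nhds (limitRatio row i b)) := by
  have hc := (contDiffAt_chainProd (n := 0) (isAdmissible_chainStart hrowk hA) hib).continuousAt
  rw [← chainProd_chainStart hrowk hib]
  exact hc.tendsto.comp (hψ.comp tendsto_ofReal_inv_atTop)

lemma tendsto_betheRoot_div {i : ℕ} {b : Fin N} (hib : i < row b) :
    Tendsto (fun u => betheRoot ψ i b u / (u : ℂ) ^ ((b : ℕ) + 1)) atTop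
      (nhds (limitRatio row i b)) := by
  refine (tendsto_chainProd hrowk hA hψ hib).congr' ?_
  filter_upwards [eventually_gt_atTop 0] with u hu
  rw [betheRoot, mul_div_cancel_left₀ _ (pow_ne_zero _ (Complex.ofReal_ne_zero.mpr hu.ne'))]

lemma eventually_betheRoot_ne {i i' : ℕ} {b b' : Fin N} (hib : i < row b) (hib' : i' < row b')
    (hne : (i, b) ≠ (i', b')) : ∀ᶠ u in atTop, betheRoot ψ i b u ≠ betheRoot ψ i' b' u := by
  have hden := ((continuous_scaledDen ((b' : ℤ) - b)).tendsto _).comp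
    ((tendsto_chainProd hrowk hA hψ hib).prodMk_nhds
      ((tendsto_chainProd hrowk hA hψ hib').prodMk_nhds tendsto_ofReal_inv_atTop))
  filter_upwards [hden.eventually_ne (scaledDen_limitRatio_ne_zero hA hib hib' hne),
    eventually_gt_atTop 0] with u hu hu0
  exact pow_succ_mul_ne_of_scaledDen_ne_zero (Complex.ofReal_ne_zero.mpr hu0.ne') hu

lemma eventually_betheLHS_eq_zero
    (hsol : ∀ᶠ ε in nhds 0, ∀ i b, 1 ≤ i → i < row b →
      rescaledBethe row ε (chainProd (ψ ε)) i b = 0)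
    {i : ℕ} {b : Fin N} (hi : 1 ≤ i) (hib : i < row b) :
    ∀ᶠ u in atTop, betheLHS row (fun i b => betheRoot ψ i b u) i b = 0 := by
  have hβ : (limitRatio row i b : ℂ) ≠ 0 := by exact_mod_cast (limitRatio_pos hA hib).ne'
  filter_upwards [tendsto_ofReal_inv_atTop.eventually hsol,
    (tendsto_chainProd hrowk hA hψ hib).eventually_ne hβ, eventually_gt_atTop 0] with u hG hX hu
  have hu' : (u : ℂ) ≠ 0 := Complex.ofReal_ne_zero.mpr hu.ne'
  have h := mul_betheLHS (row := row) hu' (chainProd (ψ (u : ℂ)⁻¹)) i b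
  rw [hG i b hi hib] at h
  exact (mul_eq_zero.mp h).resolve_left (mul_ne_zero (pow_ne_zero _ hu') hX)

lemma tendsto_mul_sum_inv_sub (hrow : ∀ b, 1 ≤ row b) (j : Fin N) :
    Tendsto (fun u : ℝ => (u : ℂ) ^ ((j : ℕ) + 1) *
        ((∑ l ∈ univ.erase j, ((u : ℂ) ^ ((j : ℕ) + 1) - (u : ℂ) ^ ((l : ℕ) + 1))⁻¹)
          - ∑ b ∈ univ.filter (fun b : Fin N => 1 < row b),
              ((u : ℂ) ^ ((j : ℕ) + 1) - betheRoot ψ 1 b u)⁻¹)) atTop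
      (nhds (((j : ℤ) - numBelow row 1 j - if 1 < row j then 1 + chainLimit row 1 j else 0 : ℤ)
        : ℂ)) := by
  have hden : ∀ i' b', i' < row b' → (0, j) ≠ (i', b') →
      scaledDen ((b' : ℤ) - j) 1 (limitRatio row i' b') 0 ≠ 0 := fun i' b' h hne => by
    simpa using scaledDen_limitRatio_ne_zero hA (hrow j) h hne
  have hlim := (tendsto_interactionSum tendsto_const_nhds
    (fun b hb => tendsto_chainProd hrowk hA hψ (mem_below.mp hb)) tendsto_ofReal_inv_atTop
    fun b hb => hden 1 b (mem_below.mp hb) (by simp)).sub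
    (tendsto_interactionSum (S := univ.erase j) (w := fun _ => 1) tendsto_const_nhds
      (fun _ _ => tendsto_const_nhds)
      tendsto_ofReal_inv_atTop fun l hl => by
        simpa using hden 0 l (hrow l) (by simpa [eq_comm] using (mem_erase.mp hl).1))
  have hcard : #((univ.erase j).filter (· < j)) = (j : ℕ) := by
    rw [filter_erase, erase_eq_of_notMem (by simp), filter_gt_eq_Iio, Fin.card_Iio]
  rw [interactionSum_zero _ _ one_ne_zero, interactionSum_zero _ _ one_ne_zero, hcard] at hlim
  convert hlim.congr' ((eventually_gt_atTop 0).mono fun u hu => (mul_sum_inv_sub_eq ψ hu j).symm)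
    using 2
  simp only [numBelow, mem_below, notMem_erase, if_false]
  split_ifs with h
  · rw [one_div_limitRatio_one_sub_one hA h]; push_cast; ring
  · push_cast; ring

lemma eventually_isCriticalPoint (hrow : ∀ b, 1 ≤ row b)
    (hsol : ∀ᶠ ε in nhds 0, ∀ i b, 1 ≤ i → i < row b →
      rescaledBethe row ε (chainProd (ψ ε)) i b = 0) :
    ∀ᶠ u : ℝ in atTop, IsCriticalPoint row k (fun a => (u : ℂ) ^ ((a : ℕ) + 1))
      (fun i b => betheRoot ψ i b u) := by
  simp only [IsCriticalPoint, eventually_and, eventually_all, eventually_all_finset]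
  refine ⟨fun a b hb => ?_, fun i _ b b' hb hb' hne => ?_, fun i _ b b' hb hb' => ?_,
    fun i hi b hb => ?_⟩
  · simpa using eventually_betheRoot_ne hrowk hA hψ hb (hrow a) (by simp : (1, b) ≠ (0, a))
  · exact eventually_betheRoot_ne hrowk hA hψ hb hb' (by simpa using hne)
  · exact eventually_betheRoot_ne hrowk hA hψ hb hb' (by simp)
  · filter_upwards [eventually_betheLHS_eq_zero hrowk hA hψ hsol (mem_Icc.mp hi).1 hb] with u hu
    rwa [betheLHS_eq hrow (fun a => betheRoot_zero ψ a u) (mem_Icc.mp hi).1] at hu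

end Asymptotics

end BetheAsymptotics

open BetheAsymptotics

theorem asymptotic_critical_points_general (N k : ℕ)
    (lam : ℕ → ℕ)
    (hmono : ∀ i j : ℕ, 1 ≤ i → i ≤ j → j ≤ k → lam j ≤ lam i)
    (hsum : ∑ i ∈ Finset.Icc 1 k, lam i = N)
    (row col : Fin N → ℕ)
    (hbox : ∀ j : Fin N, 1 ≤ row j ∧ row j ≤ k ∧ 1 ≤ col j ∧ col j ≤ lam (row j))
    (hinj : Function.Injective (fun j : Fin N => (row j, col j)))
    (hstdrow : ∀ j j' : Fin N, row j = row j' → col j < col j' → j < j')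
    (hstdcol : ∀ j j' : Fin N, col j = col j' → row j < row j' → j < j') :
    ∃ (u₀ : ℝ) (t : ℕ → Fin N → ℝ → ℂ), 0 < u₀ ∧
      (∀ u : ℝ, u > u₀ →
        ((∀ a : Fin N, ∀ b : Fin N, 1 < row b →
            t 1 b u ≠ (u : ℂ) ^ ((a : ℕ) + 1)) ∧
         (∀ i ∈ Finset.Icc 1 (k - 1), ∀ b b' : Fin N, i < row b → i < row b' →
            b ≠ b' → t i b u ≠ t i b' u) ∧
         (∀ i ∈ Finset.Icc 1 (k - 1), ∀ b b' : Fin N, i < row b → i + 1 < row b' →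
            t i b u ≠ t (i + 1) b' u) ∧
         (∀ i ∈ Finset.Icc 1 (k - 1), ∀ b : Fin N, i < row b →
            (if i = 1 then ∑ a : Fin N, ((u : ℂ) ^ ((a : ℕ) + 1) - t 1 b u)⁻¹ else 0)
              + 2 * ∑ b' ∈ Finset.univ.filter
                  (fun b' : Fin N => i < row b' ∧ b' ≠ b), (t i b u - t i b' u)⁻¹
              - ∑ b' ∈ Finset.univ.filter
                  (fun b' : Fin N => i + 1 < row b'), (t i b u - t (i + 1) b' u)⁻¹
              - (if 2 ≤ i then ∑ b' ∈ Finset.univ.filter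
                  (fun b' : Fin N => i - 1 < row b'), (t i b u - t (i - 1) b' u)⁻¹
                 else 0)
              = 0))) ∧
      (∀ i ∈ Finset.Icc 1 (k - 1), ∀ b : Fin N, i < row b →
        ∃ β : ℚ, 0 < β ∧ β < 1 ∧
          Tendsto (fun u : ℝ => t i b u / (u : ℂ) ^ ((b : ℕ) + 1))
            atTop (nhds ((β : ℂ)))) ∧
      (∀ j : Fin N,
        Tendsto (fun u : ℝ =>
            (u : ℂ) ^ ((j : ℕ) + 1) *
              ((∑ l ∈ Finset.univ.erase j,
                  ((u : ℂ) ^ ((j : ℕ) + 1) - (u : ℂ) ^ ((l : ℕ) + 1))⁻¹)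
                - ∑ b ∈ Finset.univ.filter (fun b : Fin N => 1 < row b),
                    ((u : ℂ) ^ ((j : ℕ) + 1) - t 1 b u)⁻¹))
          atTop (nhds (((col j : ℤ) - (row j : ℤ) : ℤ) : ℂ))) := by
  have hrow : ∀ b, 1 ≤ row b := fun b => (hbox b).1
  have hrowk : ∀ b, row b ≤ k := fun b => (hbox b).2.1
  have hA : ∀ m b, 1 ≤ m → m < row b → 1 ≤ chainLimit row m b :=
    fun _ _ => one_le_chainLimit hmono hsum hbox hinj hstdrow hstdcol
  obtain ⟨ψ, hψ, hsol⟩ := exists_rescaled_solution hrowk hA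
  obtain ⟨u₀, hu₀⟩ := eventually_atTop.mp (eventually_isCriticalPoint hrowk hA hψ hrow hsol)
  refine ⟨max u₀ 1, betheRoot ψ, lt_max_of_lt_right one_pos,
    fun u hu => hu₀ u ((le_max_left u₀ 1).trans hu.le), fun i hi b hib => ?_, fun j => ?_⟩
  · exact ⟨limitRatio row i b, limitRatio_pos hA hib, limitRatio_lt_one hA (mem_Icc.mp hi).1 hib,
      tendsto_betheRoot_div hrowk hA hψ hib⟩
  · have h := tendsto_mul_sum_inv_sub hrowk hA hψ hrow j
    rwa [content_eq hsum hbox hinj hstdrow j] at h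

/-- Theorem `thm:critical`, existence part, in the asymptotic zone
`z(u) = (u, u², …, u^N)`: let `λ = (λ_1 ≥ … ≥ λ_k ≥ 1)` be a partition of `N`
(1-indexed parts) and `T` a standard labeling of `Y(λ)`, encoded by its inverse
`j ↦ (row j, col j)` (1-indexed rows and columns).  The Bethe variables of row index `i`
are indexed by the boxes lying strictly below row `i`; since boxes correspond to their
labels, `t i b` denotes `t_i^{(T⁻¹(b))}`.  Then there are `u₀ > 0` and functions
`t i b : (u₀,∞) → ℂ` such that:
(a) for every `u > u₀`, `t(u)` is a critical point of the master function `S(·, z(u))`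
    (domain conditions and vanishing of all partials `∂S/∂t_i^{(b)}`);
(b) for each `(i,b)` there is a rational `0 < β < 1` with `t i b (u)/u^{T(b)} → β`;
(c) for each `j`, `z_j(u)·(Σ_{ℓ≠j}(z_j(u)−z_ℓ(u))⁻¹ − Σ_b (z_j(u)−t_1^{(b)}(u))⁻¹)`
    tends to the content `c(T,j) = y(T,j) − x(T,j)` as `u → ∞`. -/
theorem asymptotic_critical_points (N k : ℕ) (hN : 0 < N) (hk : 1 ≤ k)
    (lam : ℕ → ℕ)
    (hmono : ∀ i j : ℕ, 1 ≤ i → i ≤ j → j ≤ k → lam j ≤ lam i)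
    (hpos : 1 ≤ lam k)
    (hsum : ∑ i ∈ Finset.Icc 1 k, lam i = N)
    (row col : Fin N → ℕ)
    (hbox : ∀ j : Fin N, 1 ≤ row j ∧ row j ≤ k ∧ 1 ≤ col j ∧ col j ≤ lam (row j))
    (hinj : Function.Injective (fun j : Fin N => (row j, col j)))
    (hstdrow : ∀ j j' : Fin N, row j = row j' → col j < col j' → j < j')
    (hstdcol : ∀ j j' : Fin N, col j = col j' → row j < row j' → j < j') :
    ∃ (u₀ : ℝ) (t : ℕ → Fin N → ℝ → ℂ), 0 < u₀ ∧
      (∀ u : ℝ, u > u₀ →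
        ((∀ a : Fin N, ∀ b : Fin N, 1 < row b →
            t 1 b u ≠ (u : ℂ) ^ ((a : ℕ) + 1)) ∧
         (∀ i ∈ Finset.Icc 1 (k - 1), ∀ b b' : Fin N, i < row b → i < row b' →
            b ≠ b' → t i b u ≠ t i b' u) ∧
         (∀ i ∈ Finset.Icc 1 (k - 1), ∀ b b' : Fin N, i < row b → i + 1 < row b' →
            t i b u ≠ t (i + 1) b' u) ∧
         (∀ i ∈ Finset.Icc 1 (k - 1), ∀ b : Fin N, i < row b →
            (if i = 1 then ∑ a : Fin N, ((u : ℂ) ^ ((a : ℕ) + 1) - t 1 b u)⁻¹ else 0)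
              + 2 * ∑ b' ∈ Finset.univ.filter
                  (fun b' : Fin N => i < row b' ∧ b' ≠ b), (t i b u - t i b' u)⁻¹
              - ∑ b' ∈ Finset.univ.filter
                  (fun b' : Fin N => i + 1 < row b'), (t i b u - t (i + 1) b' u)⁻¹
              - (if 2 ≤ i then ∑ b' ∈ Finset.univ.filter
                  (fun b' : Fin N => i - 1 < row b'), (t i b u - t (i - 1) b' u)⁻¹
                 else 0)
              = 0))) ∧
      (∀ i ∈ Finset.Icc 1 (k - 1), ∀ b : Fin N, i < row b →
        ∃ β : ℚ, 0 < β ∧ β < 1 ∧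
          Tendsto (fun u : ℝ => t i b u / (u : ℂ) ^ ((b : ℕ) + 1))
            atTop (nhds ((β : ℂ)))) ∧
      (∀ j : Fin N,
        Tendsto (fun u : ℝ =>
            (u : ℂ) ^ ((j : ℕ) + 1) *
              ((∑ l ∈ Finset.univ.erase j,
                  ((u : ℂ) ^ ((j : ℕ) + 1) - (u : ℂ) ^ ((l : ℕ) + 1))⁻¹)
                - ∑ b ∈ Finset.univ.filter (fun b : Fin N => 1 < row b),
                    ((u : ℂ) ^ ((j : ℕ) + 1) - t 1 b u)⁻¹))
          atTop (nhds (((col j : ℤ) - (row j : ℤ) : ℤ) : ℂ))) :=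
  asymptotic_critical_points_general N k lam hmono hsum row col hbox hinj hstdrow hstdcol

end
end

section
/- For every labeling T of Y(λ): (a) v_T ≠ 0; (b) ρ(D) v_T = (Σ_{i=1}^k λ_i d_i) v_T for every diagonal matrix D = diag(d_1,…,d_n); (c) ρ(E_{ab}) v_T = 0 for all 1 ≤ a < b ≤ n. In particular v_T ∈ HW(λ), i.e., v_T is a highest weight vector of weight λ_1 L_1 + … + λ_k L_k. -/
/-!
Write `A = Σ_{σ ∈ C(T)} sgn σ · σ` for the column antisymmetrizer, so that `v_T = A e_T`.
Each `ρ(X)` commutes with the action of `S_N`, hence with `A`. Since `j ↦ (row j, col j)` is a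
bijection onto `Y(λ)`, row `i` carries exactly `λ_i` labels, so `e_T` and therefore `v_T` have
weight `Σ λ_i d_i`; and `v_T ≠ 0` because only `σ = 1` contributes to its `e_T`-coordinate.
Finally `ρ(E_ab) e_T` is the sum of the vectors `e_g` obtained by moving one label `q` from row
`b` to row `a`. As `λ_b ≤ λ_a`, row `a` has a label `j` in the column of `q`, so `e_g` is fixed by
the transposition `(q j) ∈ C(T)`; `A` turns that transposition into a sign, hence `A e_g = 0`.
-/

open Finset

noncomputable section

/-- `V^{⊗N}` for `V = ℂ^n`, modeled on the basis indexed by functions `Fin N → Fin n`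
(`f` corresponds to the basis vector `e_f = v_{f 1} ⊗ ⋯ ⊗ v_{f N}`). -/
abbrev TensorPow (n N : ℕ) := (Fin N → Fin n) → ℂ

/-- The action of `σ ∈ S_N` on `V^{⊗N}` permuting the tensor factors
(on basis vectors, `σ · e_g = e_{g ∘ σ⁻¹}`). -/
def permAct (n N : ℕ) (σ : Equiv.Perm (Fin N)) (w : TensorPow n N) : TensorPow n N :=
  fun f => w (f ∘ σ)

/-- The action `ρ(X) = Σ_{p=1}^N id ⊗ ⋯ ⊗ X ⊗ ⋯ ⊗ id` of an `n×n` matrix `X`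
on `V^{⊗N}`. -/
def rho (n N : ℕ) (X : Matrix (Fin n) (Fin n) ℂ) (w : TensorPow n N) : TensorPow n N :=
  fun f => ∑ p : Fin N, ∑ b : Fin n, X (f p) b * w (Function.update f p b)

/-- `lam` is a partition of `N` with exactly `k` (nonzero, decreasing) parts, recorded as a
function `Fin n → ℕ` supported on the first `k` indices. -/
def IsPartition (n N k : ℕ) (lam : Fin n → ℕ) : Prop :=
  (∀ i j : Fin n, i ≤ j → lam j ≤ lam i) ∧
  (∀ i : Fin n, lam i ≠ 0 ↔ (i : ℕ) < k) ∧
  ∑ i : Fin n, lam i = N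

/-- The highest weight space `HW(λ) ⊆ V^{⊗N}`: the vectors `w` with
`ρ(D)w = (Σ_i λ_i d_i)·w` for every diagonal `D = diag(d_1,…,d_n)` and
`ρ(E_{ab})w = 0` for all `a < b`. -/
def HW (n N : ℕ) (lam : Fin n → ℕ) : Set (TensorPow n N) :=
  {w | (∀ d : Fin n → ℂ,
          rho n N (Matrix.diagonal d) w = (∑ i : Fin n, (lam i : ℂ) * d i) • w) ∧
       ∀ a b : Fin n, a < b → rho n N (Matrix.single a b (1 : ℂ)) w = 0}

/-- A labeling `T` of the Young diagram `Y(λ)`, encoded by its inverse: label `j` sits in the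
box in row `row j` and column `col j` (both 0-indexed); the boxes must lie in the diagram and
the map `j ↦ (row j, col j)` must be injective (hence a bijection onto `Y(λ)`). -/
def IsLabeling (n N : ℕ) (lam : Fin n → ℕ) (row : Fin N → Fin n) (col : Fin N → ℕ) : Prop :=
  (∀ j, col j < lam (row j)) ∧ Function.Injective (fun j => (row j, col j))

/-- The basis vector `e_g = v_{g 1} ⊗ ⋯ ⊗ v_{g N}` of `V^{⊗N}`. -/
def eBase (n N : ℕ) (g : Fin N → Fin n) : TensorPow n N := fun f => if f = g then 1 else 0

/-- `v_T = Σ_{σ ∈ C(T)} sgn(σ)·e_{σT}`, where `C(T)` is the column stabilizer of the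
labeling `T` (the permutations preserving the column of every label), and
`e_{σT} = e_{row ∘ σ⁻¹}` (the row word of the relabeled tableau). -/
def vT (n N : ℕ) (row : Fin N → Fin n) (col : Fin N → ℕ) : TensorPow n N :=
  ∑ σ ∈ Finset.univ.filter (fun σ : Equiv.Perm (Fin N) => ∀ j, col (σ j) = col j),
    ((Equiv.Perm.sign σ : ℤ) : ℂ) • eBase n N (row ∘ σ.symm)

open Equiv Function Matrix

lemma comp_swap_eq_self {α β : Type*} [DecidableEq α] {f : α → β} {i j : α} (h : f i = f j) :
    f ∘ swap i j = f := by
  rw [comp_swap_eq_update, h, update_eq_self, ← h, update_eq_self]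

section TensorAction

variable {n N : ℕ}

def rhoLin (X : Matrix (Fin n) (Fin n) ℂ) : Module.End ℂ (TensorPow n N) where
  toFun := rho n N X
  map_add' u v := by ext f; simp [rho, mul_add, sum_add_distrib]
  map_smul' c w := by ext f; simp [rho, mul_sum, mul_left_comm]

def permActLin (σ : Perm (Fin N)) : Module.End ℂ (TensorPow n N) :=
  LinearMap.funLeft ℂ ℂ (· ∘ σ)

@[simp] lemma rhoLin_apply (X : Matrix (Fin n) (Fin n) ℂ) (w : TensorPow n N) :
    rhoLin X w = rho n N X w := rfl

@[simp] lemma permActLin_apply (σ : Perm (Fin N)) (w : TensorPow n N) :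
    permActLin σ w = permAct n N σ w := rfl

lemma permAct_mul (σ τ : Perm (Fin N)) (w : TensorPow n N) :
    permAct n N (σ * τ) w = permAct n N σ (permAct n N τ w) := rfl

lemma permAct_eBase (σ : Perm (Fin N)) (g : Fin N → Fin n) :
    permAct n N σ (eBase n N g) = eBase n N (g ∘ σ.symm) := by
  ext f
  simp [permAct, eBase, Equiv.eq_comp_symm]

lemma rho_permAct (X : Matrix (Fin n) (Fin n) ℂ) (σ : Perm (Fin N)) (w : TensorPow n N) :
    rho n N X (permAct n N σ w) = permAct n N σ (rho n N X w) := by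
  ext f
  simp only [rho, permAct]
  rw [← Equiv.sum_comp σ]
  simp [update_comp_equiv]

lemma rho_eBase (X : Matrix (Fin n) (Fin n) ℂ) (g : Fin N → Fin n) :
    rho n N X (eBase n N g) = ∑ q, ∑ c, X c (g q) • eBase n N (update g q c) := by
  ext f
  simp [rho, eBase, update_eq_iff, eq_update_iff, ite_and]

end TensorAction

section ColumnAntisymmetrizer

variable {n N : ℕ}

def colStab (col : Fin N → ℕ) : Subgroup (Perm (Fin N)) where
  carrier := {σ | ∀ j, col (σ j) = col j}
  mul_mem' hσ hτ j := (hσ _).trans (hτ j)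
  one_mem' _ := rfl
  inv_mem' {σ} hσ j := by simpa using (hσ (σ⁻¹ j)).symm

lemma swap_mem_colStab {col : Fin N → ℕ} {q j : Fin N} (h : col q = col j) :
    swap q j ∈ colStab col := fun x => by
  rcases eq_or_ne x q with rfl | hq
  · simp [h]
  rcases eq_or_ne x j with rfl | hj
  · simp [h]
  · rw [swap_apply_of_ne_of_ne hq hj]

def colAntisym (col : Fin N → ℕ) : Module.End ℂ (TensorPow n N) :=
  ∑ σ ∈ univ.filter (fun σ : Perm (Fin N) => ∀ j, col (σ j) = col j),
    ((Perm.sign σ : ℤ) : ℂ) • permActLin σ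

lemma colAntisym_apply (col : Fin N → ℕ) (w : TensorPow n N) :
    colAntisym col w = ∑ σ ∈ univ.filter (fun σ : Perm (Fin N) => ∀ j, col (σ j) = col j),
      ((Perm.sign σ : ℤ) : ℂ) • permAct n N σ w := by
  simp [colAntisym]

lemma vT_eq_colAntisym (row : Fin N → Fin n) (col : Fin N → ℕ) :
    vT n N row col = colAntisym col (eBase n N row) := by
  simp [vT, colAntisym, permAct_eBase]

lemma rho_colAntisym (X : Matrix (Fin n) (Fin n) ℂ) (col : Fin N → ℕ) (w : TensorPow n N) :
    rho n N X (colAntisym col w) = colAntisym col (rho n N X w) := by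
  simp only [colAntisym_apply, ← rhoLin_apply, map_sum, map_smul]
  simp [rho_permAct]

lemma colAntisym_eq_zero_of_swap {col : Fin N → ℕ} {q j : Fin N} {w : TensorPow n N}
    (hqj : q ≠ j) (hcol : col q = col j) (hw : permAct n N (swap q j) w = w) :
    colAntisym col w = 0 := by
  have hτ := swap_mem_colStab hcol
  refine self_eq_neg.mp ?_
  rw [colAntisym_apply, ← Finset.sum_neg_distrib]
  refine Finset.sum_equiv (Equiv.mulRight (swap q j)) (fun σ => ?_) (fun σ _ => ?_)
  · simp only [mem_filter, mem_univ, true_and, Equiv.coe_mulRight]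
    exact ((colStab col).mul_mem_cancel_right hτ).symm
  · rw [Equiv.coe_mulRight, permAct_mul, hw, Perm.sign_mul, Perm.sign_swap hqj]
    simp

end ColumnAntisymmetrizer

section Labeling

variable {n N : ℕ} {lam : Fin n → ℕ} {row : Fin N → Fin n} {col : Fin N → ℕ}

def youngBoxes (lam : Fin n → ℕ) : Finset (Σ _ : Fin n, ℕ) :=
  univ.sigma fun i => range (lam i)

lemma IsLabeling.bijOn (hT : IsLabeling n N lam row col) (hsum : ∑ i, lam i = N) :
    Set.BijOn (fun j => (⟨row j, col j⟩ : Σ _ : Fin n, ℕ)) (univ : Finset (Fin N))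
      (youngBoxes lam) := by
  have hmaps : Set.MapsTo (fun j => (⟨row j, col j⟩ : Σ _ : Fin n, ℕ)) (univ : Finset (Fin N))
      (youngBoxes lam) := fun j _ => by simpa [youngBoxes] using hT.1 j
  have hinj : Set.InjOn (fun j => (⟨row j, col j⟩ : Σ _ : Fin n, ℕ))
      (univ : Finset (Fin N)) := fun j _ j' _ h => hT.2 (by simpa using h)
  refine ⟨hmaps, hinj, surjOn_of_injOn_of_card_le _ hmaps hinj ?_⟩
  simp [youngBoxes, hsum]

lemma IsLabeling.exists_row_col (hT : IsLabeling n N lam row col) (hsum : ∑ i, lam i = N)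
    {i : Fin n} {c : ℕ} (hc : c < lam i) : ∃ j, row j = i ∧ col j = c := by
  obtain ⟨j, -, hj⟩ := (hT.bijOn hsum).surjOn (show ⟨i, c⟩ ∈ youngBoxes lam by simpa [youngBoxes])
  simp only [Sigma.mk.injEq, heq_eq_eq] at hj
  exact ⟨j, hj⟩

lemma IsLabeling.sum_comp_row {M : Type*} [AddCommMonoid M] (hT : IsLabeling n N lam row col)
    (hsum : ∑ i, lam i = N) (d : Fin n → M) : ∑ p, d (row p) = ∑ i, lam i • d i := by
  have hbij := hT.bijOn hsum
  calc ∑ p, d (row p) = ∑ x ∈ youngBoxes lam, d x.1 :=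
        sum_nbij _ (fun _ hj => hbij.mapsTo hj) hbij.injOn hbij.surjOn fun _ _ => rfl
    _ = ∑ i, lam i • d i := by simp [youngBoxes, sum_sigma]

lemma vT_apply_row (hinj : Injective fun j => (row j, col j)) : vT n N row col row = 1 := by
  rw [vT, Finset.sum_apply, Finset.sum_eq_single_of_mem 1 (by simp)]
  · simp [eBase, Perm.one_def]
  · intro σ hσ hne
    have hrow : row ∘ σ.symm ≠ row := fun h => hne <| Equiv.ext fun j =>
      hinj (Prod.ext (by simpa using (congrFun h (σ j)).symm) ((mem_filter.1 hσ).2 j))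
    simp [eBase, Ne.symm hrow]

lemma rho_diagonal_eBase (d : Fin n → ℂ) (g : Fin N → Fin n) :
    rho n N (diagonal d) (eBase n N g) = (∑ p, d (g p)) • eBase n N g := by
  simp [rho_eBase, diagonal_apply, sum_smul]

lemma rho_single_eBase (a b : Fin n) (g : Fin N → Fin n) :
    rho n N (single a b 1) (eBase n N g) =
      ∑ q ∈ univ.filter (g · = b), eBase n N (update g q a) := by
  simp [rho_eBase, single_apply, ite_and, sum_filter, eq_comm (a := b)]

lemma rho_single_vT_eq_zero (hT : IsLabeling n N lam row col) (hsum : ∑ i, lam i = N)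
    {a b : Fin n} (hab : a ≠ b) (hlam : lam b ≤ lam a) :
    rho n N (single a b 1) (vT n N row col) = 0 := by
  rw [vT_eq_colAntisym, rho_colAntisym, rho_single_eBase, map_sum]
  refine sum_eq_zero fun q hq => ?_
  replace hq : row q = b := (mem_filter.1 hq).2
  obtain ⟨j, hj, hcol⟩ := hT.exists_row_col hsum ((hq ▸ hT.1 q).trans_le hlam)
  have hqj : q ≠ j := by rintro rfl; exact hab (hj.symm.trans hq)
  refine colAntisym_eq_zero_of_swap hqj hcol.symm ?_
  rw [permAct_eBase, symm_swap, comp_swap_eq_self]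
  simp [update_of_ne hqj.symm, hj]

end Labeling

theorem vT_highest_weight_general (n N k : ℕ)
    (lam : Fin n → ℕ) (hlam : IsPartition n N k lam)
    (row : Fin N → Fin n) (col : Fin N → ℕ) (hT : IsLabeling n N lam row col) :
    vT n N row col ≠ 0 ∧
    (∀ d : Fin n → ℂ,
      rho n N (Matrix.diagonal d) (vT n N row col) =
        (∑ i : Fin n, (lam i : ℂ) * d i) • vT n N row col) ∧
    (∀ a b : Fin n, a < b →
      rho n N (Matrix.single a b (1 : ℂ)) (vT n N row col) = 0) ∧
    vT n N row col ∈ HW n N lam := by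
  obtain ⟨hdec, -, hsum⟩ := hlam
  have hne : vT n N row col ≠ 0 := fun h =>
    one_ne_zero ((vT_apply_row hT.2).symm.trans (congrFun h row))
  have hweight : ∀ d : Fin n → ℂ, rho n N (diagonal d) (vT n N row col) =
      (∑ i, (lam i : ℂ) * d i) • vT n N row col := fun d => by
    rw [vT_eq_colAntisym, rho_colAntisym, rho_diagonal_eBase, map_smul, hT.sum_comp_row hsum]
    simp [nsmul_eq_mul]
  have hraise : ∀ a b : Fin n, a < b → rho n N (single a b 1) (vT n N row col) = 0 :=
    fun a b hab => rho_single_vT_eq_zero hT hsum hab.ne (hdec a b hab.le)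
  exact ⟨hne, hweight, hraise, hweight, hraise⟩

/-- for every labeling `T` of `Y(λ)`: (a) `v_T ≠ 0`; (b) `v_T` is an
eigenvector of every `ρ(diag(d))` with eigenvalue `Σ_i λ_i d_i`; (c) `ρ(E_{ab}) v_T = 0`
for `a < b`. In particular `v_T ∈ HW(λ)`. -/
theorem vT_highest_weight (n N k : ℕ) (hn : 0 < n) (hN : 0 < N) (hk : 0 < k) (hkn : k < n)
    (lam : Fin n → ℕ) (hlam : IsPartition n N k lam)
    (row : Fin N → Fin n) (col : Fin N → ℕ) (hT : IsLabeling n N lam row col) :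
    vT n N row col ≠ 0 ∧
    (∀ d : Fin n → ℂ,
      rho n N (Matrix.diagonal d) (vT n N row col) =
        (∑ i : Fin n, (lam i : ℂ) * d i) • vT n N row col) ∧
    (∀ a b : Fin n, a < b →
      rho n N (Matrix.single a b (1 : ℂ)) (vT n N row col) = 0) ∧
    vT n N row col ∈ HW n N lam :=
  vT_highest_weight_general n N k lam hlam row col hT

end
end

section
/- The elements θ_1(z), …, θ_n(z) pairwise commute: θ_i(z)·θ_j(z) = θ_j(z)·θ_i(z) in ℂ[S_n] for all 1 ≤ i, j ≤ n. -/
/-!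
Write `θ_i = Σ_{k ≠ i} r_{ik}` with the rational r-matrix `r_{ij} = s_{ij} / (z_i − z_j)`.
Expanding `⁅θ_i, θ_j⁆` bilinearly, brackets of r's with disjoint index pairs vanish,
`⁅r_{ij}, r_{ji}⁆ = 0` by antisymmetry, and what remains is a sum over `k ∉ {i, j}` of the
classical Yang–Baxter expressions `⁅r_{ij}, r_{ik} + r_{jk}⁆ + ⁅r_{ik}, r_{jk}⁆`. For the rational
r-matrix each of these vanishes: all six products of two transpositions of `{i, j, k}` are one
of its two 3-cycles, and the two resulting coefficients are `±` the partial-fraction sum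
`1/((x−y)(x−w)) − 1/((x−y)(y−w)) + 1/((x−w)(y−w)) = 0`.
-/

open Finset

/-- The element `θ_i(z) = Σ_{j≠i} (z_i − z_j)⁻¹ s_{ij}` of the group algebra `ℂ[S_n]`. -/
noncomputable def theta (n : ℕ) (z : Fin n → ℂ) (i : Fin n) :
    MonoidAlgebra ℂ (Equiv.Perm (Fin n)) :=
  ∑ j ∈ Finset.univ.erase i, MonoidAlgebra.single (Equiv.swap i j) ((z i - z j)⁻¹)

open Equiv MonoidAlgebra

section Gaudin

variable {ι L : Type*} [Fintype ι] [DecidableEq ι] [LieRing L]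

def gaudin (r : ι → ι → L) (i : ι) : L :=
  ∑ k ∈ univ.erase i, r i k

theorem lie_gaudin_eq_zero (r : ι → ι → L) (h_anti : ∀ i j, i ≠ j → r j i = -r i j)
    (h_local : ∀ i k j l, i ≠ j → i ≠ l → k ≠ j → k ≠ l → ⁅r i k, r j l⁆ = 0)
    (h_cybe : ∀ i j k, i ≠ j → i ≠ k → j ≠ k → ⁅r i j, r i k + r j k⁆ + ⁅r i k, r j k⁆ = 0)
    (i j : ι) : ⁅gaudin r i, gaudin r j⁆ = 0 := by
  rcases eq_or_ne i j with rfl | hij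
  · exact lie_self _
  set S := (univ.erase i).erase j
  have mem_S {m : ι} (hm : m ∈ S) : m ≠ i ∧ m ≠ j := by
    simp only [S, mem_erase] at hm
    exact ⟨hm.2.1, hm.1⟩
  have split_i : gaudin r i = r i j + ∑ k ∈ S, r i k :=
    (add_sum_erase _ _ (mem_erase.2 ⟨hij.symm, mem_univ j⟩)).symm
  have split_j : gaudin r j = -r i j + ∑ l ∈ S, r j l := by
    rw [gaudin, ← add_sum_erase _ _ (mem_erase.2 ⟨hij, mem_univ i⟩), erase_right_comm,
      h_anti i j hij]
  have diag : ⁅∑ k ∈ S, r i k, ∑ l ∈ S, r j l⁆ = ∑ m ∈ S, ⁅r i m, r j m⁆ := by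
    rw [sum_lie]
    refine sum_congr rfl fun k hk => ?_
    rw [lie_sum]
    refine sum_eq_single_of_mem k hk fun l hl hlk => ?_
    exact h_local i k j l hij (mem_S hl).1.symm (mem_S hk).2 hlk.symm
  calc ⁅gaudin r i, gaudin r j⁆
      = ⁅r i j, ∑ k ∈ S, r i k + ∑ l ∈ S, r j l⁆ + ⁅∑ k ∈ S, r i k, ∑ l ∈ S, r j l⁆ := by
        rw [split_i, split_j, add_lie, lie_add, lie_add, lie_neg, lie_neg, lie_self, neg_zero,
          zero_add, lie_add, lie_skew (r i j)]
        abel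
    _ = ∑ m ∈ S, (⁅r i j, r i m + r j m⁆ + ⁅r i m, r j m⁆) := by
        rw [diag, ← sum_add_distrib, lie_sum, sum_add_distrib]
    _ = 0 := sum_eq_zero fun m hm => h_cybe i j m hij (mem_S hm).1.symm (mem_S hm).2.symm

end Gaudin

theorem Equiv.swap_mul_swap_eq_swap_mul_swap {α : Type*} [DecidableEq α] {a b c : α}
    (hca : c ≠ a) (hcb : c ≠ b) : swap a b * swap a c = swap b c * swap a b := by
  rw [mul_swap_eq_swap_mul, swap_apply_left, swap_apply_of_ne_of_ne hca hcb]

theorem inv_sub_mul_inv_sub_cyclic {K : Type*} [Field K] {x y w : K} (hxy : x ≠ y) (hxw : x ≠ w)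
    (hyw : y ≠ w) :
    (x - y)⁻¹ * (x - w)⁻¹ - (x - y)⁻¹ * (y - w)⁻¹ + (x - w)⁻¹ * (y - w)⁻¹ = 0 := by
  have := sub_ne_zero.2 hxy
  have := sub_ne_zero.2 hxw
  have := sub_ne_zero.2 hyw
  field_simp
  ring

section RationalRMatrix

variable {α K : Type*} [DecidableEq α] [Field K]

noncomputable def rationalRMatrix (z : α → K) (i j : α) : MonoidAlgebra K (Perm α) :=
  single (swap i j) (z i - z j)⁻¹

theorem rationalRMatrix_flip (z : α → K) (i j : α) :
    rationalRMatrix z j i = -rationalRMatrix z i j := by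
  rw [rationalRMatrix, rationalRMatrix, swap_comm, ← neg_sub, inv_neg, single_neg]

theorem lie_rationalRMatrix_of_disjoint (z : α → K) {i k j l : α} (hij : i ≠ j) (hil : i ≠ l)
    (hkj : k ≠ j) (hkl : k ≠ l) : ⁅rationalRMatrix z i k, rationalRMatrix z j l⁆ = 0 := by
  have hswap : Commute (swap i k) (swap j l) := by
    rw [Commute, SemiconjBy, mul_swap_eq_swap_mul, swap_apply_of_ne_of_ne hij.symm hkj.symm,
      swap_apply_of_ne_of_ne hil.symm hkl.symm]
  exact commute_iff_lie_eq.1 (single_commute_single hswap (mul_comm _ _))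

theorem rationalRMatrix_cybe (z : α → K) {i j k : α} (hij : z i ≠ z j) (hik : z i ≠ z k)
    (hjk : z j ≠ z k) :
    ⁅rationalRMatrix z i j, rationalRMatrix z i k + rationalRMatrix z j k⁆ +
      ⁅rationalRMatrix z i k, rationalRMatrix z j k⁆ = 0 := by
  have hij' := ne_of_apply_ne z hij
  have hik' := ne_of_apply_ne z hik
  have hjk' := ne_of_apply_ne z hjk
  have σ₁ : swap j k * swap i j = swap i j * swap i k :=
    (swap_mul_swap_eq_swap_mul_swap hik'.symm hjk'.symm).symm
  have σ₂ : swap i k * swap j k = swap i j * swap i k := by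
    rw [swap_comm i k, swap_comm j k, swap_mul_swap_eq_swap_mul_swap hjk' hij'.symm]
  have τ₁ : swap i j * swap j k = swap i k * swap i j := by
    rw [swap_comm i j, swap_mul_swap_eq_swap_mul_swap hjk'.symm hik'.symm]
  have τ₂ : swap j k * swap i k = swap i k * swap i j := by
    rw [← τ₁, swap_comm j k, swap_comm i k, swap_mul_swap_eq_swap_mul_swap hik' hij',
      swap_comm i j]
  simp only [Ring.lie_def, rationalRMatrix, mul_add, add_mul, single_mul_single, σ₁, σ₂, τ₁, τ₂]
  set a := (z i - z j)⁻¹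
  set b := (z i - z k)⁻¹
  set c := (z j - z k)⁻¹
  calc _ = single (swap i j * swap i k) (a * b - a * c + b * c)
        - single (swap i k * swap i j) (a * b - a * c + b * c) := by
        rw [single_add, single_add, single_sub, single_sub, mul_comm b a, mul_comm c a,
          mul_comm c b]
        abel
    _ = 0 := by
        rw [inv_sub_mul_inv_sub_cyclic hij hik hjk, single_zero, single_zero, sub_self]

end RationalRMatrix

attribute [local instance] LieRing.ofAssociativeRing

theorem theta_eq_gaudin (n : ℕ) (z : Fin n → ℂ) : theta n z = gaudin (rationalRMatrix z) := rfl

/-- the elements `θ_1(z), …, θ_n(z)` pairwise commute in `ℂ[S_n]`. -/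
theorem theta_pairwise_commute (n : ℕ) (z : Fin n → ℂ)
    (hz : Function.Injective z) (i j : Fin n) :
    theta n z i * theta n z j = theta n z j * theta n z i := by
  rw [theta_eq_gaudin]
  refine commute_iff_lie_eq.2 (lie_gaudin_eq_zero _ (fun i j _ => rationalRMatrix_flip z i j)
    (fun _ _ _ _ => lie_rationalRMatrix_of_disjoint z) (fun _ _ _ hij hik hjk => ?_) i j)
  exact rationalRMatrix_cybe z (hz.ne hij) (hz.ne hik) (hz.ne hjk)
end

section
/- Let V be a finite-dimensional ℂ-vector space and 𝒜 ⊆ End_ℂ(V) a commutative subalgebra. Then V is the internal direct sum of its nonzero generalized weight spaces: V = ⊕_μ V_μ, where μ ranges over the ℂ-algebra homomorphisms 𝒜 → ℂ; in particular the distinct nonzero V_μ are linearly independent and together span V. -/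
open Function

section aux

variable {V : Type*} [AddCommGroup V] [Module ℂ V]

lemma pow_apply_eq_zero_of_le' {S : Module.End ℂ V} {v : V} {k n : ℕ} (h : k ≤ n)
    (hk : (S ^ k) v = 0) : (S ^ n) v = 0 := by
  obtain ⟨j, rfl⟩ := Nat.exists_eq_add_of_le h
  rw [add_comm, pow_add, Module.End.mul_apply, hk, map_zero]

lemma kill_add {S T : Module.End ℂ V} (h : Commute S T) {v : V}
    (hS : ∃ k, (S ^ k) v = 0) (hT : ∃ k, (T ^ k) v = 0) :
    ∃ k, ((S + T) ^ k) v = 0 := by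
  obtain ⟨k, hk⟩ := hS
  obtain ⟨m, hm⟩ := hT
  refine ⟨k + m, ?_⟩
  rw [h.add_pow, LinearMap.sum_apply]
  apply Finset.sum_eq_zero
  intro i hi
  rw [Finset.mem_range, Nat.lt_succ_iff] at hi
  have hcast : S ^ i * T ^ (k + m - i) * ((k + m).choose i : Module.End ℂ V)
      = ((k + m).choose i : Module.End ℂ V) * (S ^ i * T ^ (k + m - i)) :=
    ((Nat.cast_commute _ _).symm).eq
  rw [hcast, Module.End.mul_apply]
  rcases le_or_gt k i with hik | hik
  · rw [(h.pow_pow i (k + m - i)).eq, Module.End.mul_apply,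
      pow_apply_eq_zero_of_le' hik hk, map_zero, map_zero]
  · have hmle : m ≤ k + m - i := by omega
    rw [Module.End.mul_apply, pow_apply_eq_zero_of_le' hmle hm, map_zero, map_zero]

lemma eig_unique {A : Module.End ℂ V} {c c' : ℂ} {v : V} (hv : v ≠ 0)
    (h1 : ∃ k, ((A - c • (1 : Module.End ℂ V)) ^ k) v = 0)
    (h2 : ∃ k, ((A - c' • (1 : Module.End ℂ V)) ^ k) v = 0) : c = c' := by
  by_contra hne
  have hd := Module.End.disjoint_genEigenspace A hne ⊤ ⊤
  have h1' : v ∈ A.maxGenEigenspace c := (Module.End.mem_maxGenEigenspace A c v).2 h1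
  have h2' : v ∈ A.maxGenEigenspace c' := (Module.End.mem_maxGenEigenspace A c' v).2 h2
  exact hv (by simpa using hd.le_bot ⟨h1', h2'⟩)

lemma weightSubmodule_eq' (𝒜 : Subalgebra ℂ (Module.End ℂ V)) (μ : 𝒜 → ℂ) :
    (⨅ A : 𝒜, ⨆ k : ℕ, LinearMap.ker (((A : Module.End ℂ V) - μ A • 1) ^ k)) =
      ⨅ A : 𝒜, Module.End.maxGenEigenspace (A : Module.End ℂ V) (μ A) := by
  refine iInf_congr fun A => ?_
  simp_rw [← Module.End.genEigenspace_nat]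
  exact Module.End.iSup_genEigenspace_eq _ _

end aux

section hom

variable {V : Type*} [AddCommGroup V] [Module ℂ V]

lemma exists_algHom_of_ne_bot (𝒜 : Subalgebra ℂ (Module.End ℂ V))
    (hcomm : ∀ A B : Module.End ℂ V, A ∈ 𝒜 → B ∈ 𝒜 → A * B = B * A) (χ : 𝒜 → ℂ)
    (h : (⨅ A : 𝒜, Module.End.maxGenEigenspace (A : Module.End ℂ V) (χ A)) ≠ ⊥) :
    ∃ μ : 𝒜 →ₐ[ℂ] ℂ, ⇑μ = χ := by
  obtain ⟨v, hv, hv0⟩ := Submodule.exists_mem_ne_zero_of_ne_bot h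
  have hvA : ∀ A : 𝒜, ∃ k, (((A : Module.End ℂ V) - χ A • (1 : Module.End ℂ V)) ^ k) v = 0 := by
    intro A
    have := (Submodule.mem_iInf _).1 hv A
    exact (Module.End.mem_maxGenEigenspace _ _ v).1 this
  have hmem : ∀ (A : 𝒜) (c : ℂ),
      (∃ k, (((A : Module.End ℂ V) - c • (1 : Module.End ℂ V)) ^ k) v = 0) → χ A = c :=
    fun A c hc => eig_unique hv0 (hvA A) hc
  -- commutation of shifted operators
  have hC : ∀ A B : 𝒜, ∀ c d : ℂ, Commute ((A : Module.End ℂ V) - c • 1)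
      ((B : Module.End ℂ V) - d • 1) := by
    intro A B c d
    have hAB : Commute (A : Module.End ℂ V) (B : Module.End ℂ V) := hcomm _ _ A.2 B.2
    have h1 : Commute (A : Module.End ℂ V) (d • (1 : Module.End ℂ V)) :=
      (Commute.one_right _).smul_right _
    have h2 : Commute (c • (1 : Module.End ℂ V)) (B : Module.End ℂ V) :=
      (Commute.one_left _).smul_left _
    have h3 : Commute (c • (1 : Module.End ℂ V)) (d • (1 : Module.End ℂ V)) :=
      ((Commute.one_left _).smul_left _).smul_right _
    exact (hAB.sub_right h1).sub_left (h2.sub_right h3)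
  refine ⟨{ toFun := χ
            map_one' := hmem 1 1 ⟨1, by simp⟩
            map_zero' := hmem 0 0 ⟨1, by simp⟩
            map_add' := ?_
            map_mul' := ?_
            commutes' := ?_ }, rfl⟩
  · intro A B
    show χ (A * B) = χ A * χ B
    refine hmem (A * B) (χ A * χ B) ?_
    set S : Module.End ℂ V := (A : Module.End ℂ V) - χ A • 1
    set T : Module.End ℂ V := (B : Module.End ℂ V) - χ B • 1
    have hdecomp : ((A * B : 𝒜) : Module.End ℂ V) - (χ A * χ B) • 1 =
        (A : Module.End ℂ V) * T + χ B • S := by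
      push_cast
      simp only [S, T, mul_sub, smul_sub, mul_smul_comm, smul_smul, mul_one]
      rw [mul_comm (χ B) (χ A)]
      abel
    rw [hdecomp]
    have hAB : Commute (A : Module.End ℂ V) (B : Module.End ℂ V) := hcomm _ _ A.2 B.2
    have hAT : Commute (A : Module.End ℂ V) T :=
      hAB.sub_right ((Commute.one_right _).smul_right _)
    have hAS : Commute (A : Module.End ℂ V) S :=
      (Commute.refl _).sub_right ((Commute.one_right _).smul_right _)
    have hcomm2 : Commute ((A : Module.End ℂ V) * T) (χ B • S) :=
      (Commute.mul_left hAS ((hC A B (χ A) (χ B)).symm)).smul_right _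
    refine kill_add hcomm2 ?_ ?_
    · obtain ⟨k, hk⟩ := hvA B
      refine ⟨k, ?_⟩
      rw [hAT.mul_pow, Module.End.mul_apply, hk, map_zero]
    · obtain ⟨k, hk⟩ := hvA A
      refine ⟨k, ?_⟩
      rw [smul_pow, LinearMap.smul_apply, hk, smul_zero]
  · intro A B
    show χ (A + B) = χ A + χ B
    refine hmem (A + B) (χ A + χ B) ?_
    have : ((A + B : 𝒜) : Module.End ℂ V) - (χ A + χ B) • 1 =
        ((A : Module.End ℂ V) - χ A • 1) + ((B : Module.End ℂ V) - χ B • 1) := by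
      push_cast
      rw [add_smul]
      abel
    rw [this]
    exact kill_add (hC A B (χ A) (χ B)) (hvA A) (hvA B)
  · intro c
    show χ (algebraMap ℂ 𝒜 c) = c
    refine hmem (algebraMap ℂ 𝒜 c) c ⟨1, ?_⟩
    have : ((algebraMap ℂ 𝒜 c : 𝒜) : Module.End ℂ V) = c • 1 := by
      rw [← Algebra.algebraMap_eq_smul_one]
      rfl
    simp [this]

end hom


/-- The generalized weight space `V_μ = ⋂_{A ∈ 𝒜} ⋃_{k ∈ ℕ} ker((A − μ(A)·id)^k)`,
as a submodule (the union over `k` of the increasing chain of kernels is the supremum). -/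
noncomputable def weightSubmodule {V : Type*} [AddCommGroup V] [Module ℂ V]
    (𝒜 : Subalgebra ℂ (Module.End ℂ V)) (μ : 𝒜 → ℂ) : Submodule ℂ V :=
  ⨅ A : 𝒜, ⨆ k : ℕ, LinearMap.ker (((A : Module.End ℂ V) - μ A • 1) ^ k)

/-- for a finite-dimensional `V` and a commutative subalgebra
`𝒜 ⊆ End_ℂ(V)`, `V` is the internal direct sum of the generalized weight spaces `V_μ`,
`μ` ranging over the ℂ-algebra homomorphisms `𝒜 → ℂ`: the weight spaces are
independent and their supremum is all of `V`. -/
theorem weight_space_decomposition {V : Type*} [AddCommGroup V] [Module ℂ V]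
    [FiniteDimensional ℂ V] (𝒜 : Subalgebra ℂ (Module.End ℂ V))
    (hcomm : ∀ A B : Module.End ℂ V, A ∈ 𝒜 → B ∈ 𝒜 → A * B = B * A) :
    iSupIndep (fun μ : 𝒜 →ₐ[ℂ] ℂ => weightSubmodule 𝒜 (fun A => μ A)) ∧
      (⨆ μ : 𝒜 →ₐ[ℂ] ℂ, weightSubmodule 𝒜 (fun A => μ A)) = ⊤ := by
  have hW : ∀ μ : 𝒜 → ℂ, weightSubmodule 𝒜 μ =
      ⨅ A : 𝒜, Module.End.maxGenEigenspace (A : Module.End ℂ V) (μ A) :=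
    fun μ => weightSubmodule_eq' 𝒜 μ
  set f : 𝒜 → Module.End ℂ V := fun A => (A : Module.End ℂ V) with hf
  have hmapsTo : ∀ (i j : 𝒜) (φ : ℂ),
      Set.MapsTo (f i) ((f j).maxGenEigenspace φ) ((f j).maxGenEigenspace φ) :=
    fun i j φ => Module.End.mapsTo_maxGenEigenspace_of_comm (hcomm _ _ j.2 i.2) φ
  constructor
  · have hind := Module.End.independent_iInf_maxGenEigenspace_of_forall_mapsTo f hmapsTo
    have hcomp := hind.comp
      (f := fun μ : 𝒜 →ₐ[ℂ] ℂ => (⇑μ : 𝒜 → ℂ)) (fun μ ν h => DFunLike.coe_injective h)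
    have : (fun μ : 𝒜 →ₐ[ℂ] ℂ => weightSubmodule 𝒜 (fun A => μ A)) =
        (fun χ : 𝒜 → ℂ => ⨅ A : 𝒜, Module.End.maxGenEigenspace (f A) (χ A)) ∘
          (fun μ : 𝒜 →ₐ[ℂ] ℂ => (⇑μ : 𝒜 → ℂ)) := by
      funext μ; exact hW _
    rw [this]
    exact hcomp
  · have htop :=
      Module.End.iSup_iInf_maxGenEigenspace_eq_top_of_iSup_maxGenEigenspace_eq_top_of_commute f
        (fun A B _ => hcomm _ _ A.2 B.2)
        (fun A => Module.End.iSup_maxGenEigenspace_eq_top (f A))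
    rw [eq_top_iff, ← htop]
    refine iSup_le fun χ => ?_
    rcases eq_or_ne (⨅ A : 𝒜, Module.End.maxGenEigenspace (f A) (χ A)) ⊥ with hb | hb
    · rw [hb]; exact bot_le
    · obtain ⟨μ, hμ⟩ := exists_algHom_of_ne_bot 𝒜 hcomm χ hb
      have : (⨅ A : 𝒜, Module.End.maxGenEigenspace (f A) (χ A)) =
          weightSubmodule 𝒜 (fun A => μ A) := by rw [hW, hμ]
      rw [this]
      exact le_iSup (fun μ : 𝒜 →ₐ[ℂ] ℂ => weightSubmodule 𝒜 (fun A => μ A)) μ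
end

section
/- Let V be a finite-dimensional ℂ-vector space and 𝒜 ⊆ End_ℂ(V) a commutative subalgebra. Then 𝒜 is a semisimple ring if and only if the action of 𝒜 on V is semisimple, i.e., V is a direct sum of one-dimensional 𝒜-submodules (equivalently, there is a basis of V with respect to which every element of 𝒜 is a diagonal matrix). -/
/-!
A finite-dimensional commutative algebra is Artinian, and a commutative Artinian ring is
semisimple exactly when it is reduced. If `𝒜` is reduced, the minimal polynomial of each of its
elements is squarefree, so every element of `𝒜` is a semisimple endomorphism, and commuting
semisimple endomorphisms over `ℂ` are simultaneously diagonalizable. Conversely, an element of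
`𝒜` that is nilpotent and diagonal in a fixed basis has nilpotent, hence zero, eigenvalues.
-/

abbrev Subalgebra.commRingOfComm {R A : Type*} [CommRing R] [Ring A] [Algebra R A]
    (S : Subalgebra R A) (hcomm : ∀ a ∈ S, ∀ b ∈ S, a * b = b * a) : CommRing S :=
  { S.toRing with mul_comm := fun a b => Subtype.ext (hcomm a a.2 b b.2) }

theorem IsArtinianRing.isSemisimpleRing_iff_isReduced (R : Type*) [CommRing R]
    [IsArtinianRing R] : IsSemisimpleRing R ↔ IsReduced R :=
  ⟨fun _ => inferInstance, fun _ => isSemisimpleRing_of_isReduced R⟩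

theorem Module.Basis.exists_fin_finrank_forall_mem {K V : Type*} [DivisionRing K]
    [AddCommGroup V] [Module K V] [FiniteDimensional K V] {s : Set V}
    (hs : Submodule.span K s = ⊤) :
    ∃ b : Module.Basis (Fin (Module.finrank K V)) K V, ∀ i, b i ∈ s := by
  let b := Module.Basis.ofSpan hs.ge
  refine ⟨b.reindex (b.indexEquiv (Module.finBasis K V)), fun i => ?_⟩
  rw [Module.Basis.reindex_apply]
  exact Module.Basis.ofSpan_subset hs.ge ⟨_, rfl⟩

namespace Module.End

variable {K V : Type*} [Field K] [AddCommGroup V] [Module K V]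

theorem eq_zero_of_isNilpotent_of_forall_basis_eigenvector {ι : Type*} {f : End K V}
    (hf : IsNilpotent f) (b : Module.Basis ι K V) (hb : ∀ i, ∃ c : K, f (b i) = c • b i) :
    f = 0 := by
  obtain ⟨n, hn⟩ := hf
  refine b.ext fun i => ?_
  obtain ⟨c, hc⟩ := hb i
  have hpow : (f ^ n) (b i) = c ^ n • b i :=
    HasEigenvector.pow_apply ⟨mem_eigenspace_iff.mpr hc, b.ne_zero i⟩ n
  have hc0 : c = 0 := by
    rw [hn, LinearMap.zero_apply, eq_comm, smul_eq_zero] at hpow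
    exact pow_eq_zero_iff'.mp (hpow.resolve_right (b.ne_zero i)) |>.1
  rw [hc, hc0, zero_smul, LinearMap.zero_apply]

theorem _root_.Subalgebra.isReduced_of_forall_basis_eigenvector {ι : Type*}
    (A : Subalgebra K (End K V)) (b : Module.Basis ι K V)
    (hb : ∀ i, ∀ f ∈ A, ∃ c : K, f (b i) = c • b i) : IsReduced A :=
  ⟨fun f hf => Subtype.ext <|
    eq_zero_of_isNilpotent_of_forall_basis_eigenvector (hf.map A.val) b (hb · f f.2)⟩

variable [FiniteDimensional K V]

theorem isSemisimple_of_mem_of_isReduced (A : Subalgebra K (End K V)) [IsReduced A]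
    {f : End K V} (hf : f ∈ A) : f.IsSemisimple := by
  have hmin : minpoly K f = minpoly K (⟨f, hf⟩ : A) :=
    minpoly.algHom_eq A.val Subtype.val_injective ⟨f, hf⟩
  have hsqf : Squarefree (minpoly K f) :=
    hmin ▸ (minpoly.isRadical K _).squarefree (minpoly.ne_zero (.of_finite K _))
  exact isSemisimple_of_squarefree_aeval_eq_zero hsqf (minpoly.aeval K f)

variable [IsAlgClosed K]

theorem iSup_iInf_eigenspace_eq_top_of_commute {ι : Type*} (f : ι → End K V)
    (h : Pairwise fun i j ↦ Commute (f i) (f j)) (hs : ∀ i, (f i).IsSemisimple) :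
    ⨆ χ : ι → K, ⨅ i, (f i).eigenspace (χ i) = ⊤ := by
  have := iSup_iInf_maxGenEigenspace_eq_top_of_iSup_maxGenEigenspace_eq_top_of_commute f h
    fun i => iSup_maxGenEigenspace_eq_top (f i)
  simpa only [(hs _).isFinitelySemisimple.maxGenEigenspace_eq_eigenspace] using this

theorem span_setOf_forall_eigenvector_eq_top {ι : Type*} (f : ι → End K V)
    (h : Pairwise fun i j ↦ Commute (f i) (f j)) (hs : ∀ i, (f i).IsSemisimple) :
    Submodule.span K {v | ∀ i, ∃ c : K, f i v = c • v} = ⊤ := by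
  rw [eq_top_iff, ← iSup_iInf_eigenspace_eq_top_of_commute f h hs, iSup_le_iff]
  intro χ v hv
  refine Submodule.subset_span fun i => ⟨χ i, ?_⟩
  exact mem_eigenspace_iff.mp ((Submodule.mem_iInf _).mp hv i)

end Module.End

/-- for a finite-dimensional complex vector space `V` and a commutative
subalgebra `𝒜 ⊆ End_ℂ(V)`, `𝒜` is a semisimple ring if and only if the action of `𝒜`
on `V` is semisimple, i.e. `V` has a basis with respect to which every element of `𝒜`
is diagonal (a basis of simultaneous eigenvectors). -/
theorem semisimple_ring_iff_semisimple_action {V : Type*} [AddCommGroup V] [Module ℂ V]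
    [FiniteDimensional ℂ V] (𝒜 : Subalgebra ℂ (Module.End ℂ V))
    (hcomm : ∀ A B : Module.End ℂ V, A ∈ 𝒜 → B ∈ 𝒜 → A * B = B * A) :
    IsSemisimpleRing 𝒜 ↔
      ∃ B : Module.Basis (Fin (Module.finrank ℂ V)) ℂ V,
        ∀ q, ∀ A ∈ 𝒜, ∃ c : ℂ, A (B q) = c • B q := by
  let := 𝒜.commRingOfComm fun A hA B hB => hcomm A B hA hB
  have : IsArtinianRing 𝒜 := .of_finite ℂ 𝒜
  rw [IsArtinianRing.isSemisimpleRing_iff_isReduced]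
  refine ⟨fun _ => ?_, fun ⟨B, hB⟩ => 𝒜.isReduced_of_forall_basis_eigenvector B hB⟩
  have hspan := Module.End.span_setOf_forall_eigenvector_eq_top
    (fun A : 𝒜 => (A : Module.End ℂ V)) (fun A B _ => hcomm A B A.2 B.2)
    fun A => Module.End.isSemisimple_of_mem_of_isReduced 𝒜 A.2
  obtain ⟨B, hB⟩ := Module.Basis.exists_fin_finrank_forall_mem hspan
  exact ⟨B, fun q A hA => hB q ⟨A, hA⟩⟩
end
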